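/- arXiv:1812.08428 — 4 statements merged into one kernel-verified Lean document; each statement's English description precedes it below -/
import Mathlib

section
/- Let (W, S) be a Coxeter system. Then the Bruhat order on W is a directed partial order: for every finite subset E of W there exists w in W such that v ≤ w for all v in E. -/
/-!
Björner–Brenti's sign-twisted action of `W` on `W × ℤˣ` shows that the parity of the number of
occurrences of a reflection `t` in the right inversion sequence of a word depends only on the
product of the word; it is odd exactly when `t` is a right inversion. This is the strong exchange
property, and it makes every chain of reflection steps raising the length by one a relation of the
subword order. Such chains satisfy the lifting property: if `s` is a left descent of `w` and `u`
lies below `w`, so does `s u`. A common upper bound of `u` and `s v` is then obtained from a common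
upper bound `z` of `u` and `v` by passing to `z` or `s z`, whichever has `s` as a left descent.
-/

namespace CoxeterSystem

open List
open scoped Classical

variable {B W : Type*} [Group W] {M : CoxeterMatrix B} (cs : CoxeterSystem M W)

local prefix:100 "s" => cs.simple
local prefix:100 "π" => cs.wordProd
local prefix:100 "ℓ" => cs.length
local prefix:100 "ris" => cs.rightInvSeq

theorem rightInvSeq_cons (i : B) (ω : List B) :
    ris (i :: ω) = (π ω)⁻¹ * s i * π ω :: ris ω := rfl

theorem alternatingWord_add (i j : B) (a n : ℕ) :
    alternatingWord i j (n + a) =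
      (if Even a then alternatingWord i j n else alternatingWord j i n) ++ alternatingWord i j a := by
  induction n with
  | zero => split_ifs <;> simp [alternatingWord]
  | succ n ih =>
    rw [Nat.add_right_comm, alternatingWord_succ', ih, alternatingWord_succ', alternatingWord_succ']
    by_cases ha : Even a <;> by_cases hn : Even n <;> simp [ha, hn, Nat.even_add]

theorem wordProd_alternatingWord_coxeter_add (i j : B) (a : ℕ) :
    π (alternatingWord i j (M i j + a)) = π (braidWord M i j) * π (alternatingWord i j a) := by
  rw [alternatingWord_add, wordProd_append]
  split_ifs
  · rfl
  · rw [M.symmetric, ← wordProd_braidWord_eq]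

theorem wordProd_alternatingWord_two_mul (i j : B) :
    π (alternatingWord i j (2 * M i j)) = 1 := by
  rw [prod_alternatingWord_eq_mul_pow, if_pos (even_two_mul _), one_mul,
    Nat.mul_div_cancel_left _ two_pos, simple_mul_simple_pow]

theorem rightInvSeq_alternatingWord (i j : B) (n : ℕ) :
    ris (alternatingWord i j n) = ((range n).map fun a =>
      (π (alternatingWord i j a))⁻¹ * π (alternatingWord i j (a + 1))).reverse := by
  induction n with
  | zero => rfl
  | succ n ih =>
    rw [alternatingWord_succ', rightInvSeq_cons, ih, range_succ, map_append, reverse_append]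
    simp [alternatingWord_succ' i j n, wordProd_cons, mul_assoc]

theorem even_count_rightInvSeq_alternatingWord (i j : B) (t : W) :
    Even ((ris (alternatingWord i j (2 * M i j))).count t) := by
  have periodic : (fun a => (π (alternatingWord i j a))⁻¹ * π (alternatingWord i j (a + 1))) ∘
      (M i j + ·) = fun a => (π (alternatingWord i j a))⁻¹ * π (alternatingWord i j (a + 1)) := by
    funext a
    simp only [Function.comp_apply, add_assoc, wordProd_alternatingWord_coxeter_add, mul_inv_rev,
      mul_assoc, inv_mul_cancel_left]
  rw [rightInvSeq_alternatingWord, count_reverse, two_mul, range_add, map_append, map_map,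
    periodic, count_append]
  exact ⟨_, rfl⟩

/-- The generator `π_i` of the sign-twisted action in Björner–Brenti, *Combinatorics of Coxeter
Groups*, Theorem 1.4.3 (there on reflections only; here on all of `W`). -/
noncomputable def signedConj (i : B) (p : W × ℤˣ) : W × ℤˣ :=
  (s i * p.1 * s i, if p.1 = s i then -p.2 else p.2)

theorem signedConj_involutive (i : B) : Function.Involutive (cs.signedConj i) := by
  rintro ⟨x, ε⟩
  have hx : s i * (s i * x * s i) * s i = x := by simp [mul_assoc]
  by_cases h : x = s i
  · simp [signedConj, h]
  · have h' : s i * x * s i ≠ s i := fun h' => h (by rw [← hx, h']; simp)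
    simp [signedConj, h, h', hx]

noncomputable def signedConjPerm (i : B) : Equiv.Perm (W × ℤˣ) :=
  (cs.signedConj_involutive i).toPerm

noncomputable def signedConjWord (ω : List B) : Equiv.Perm (W × ℤˣ) :=
  (ω.map cs.signedConjPerm).prod

theorem signedConjWord_apply (ω : List B) (t : W) (ε : ℤˣ) :
    cs.signedConjWord ω (t, ε) = (π ω * t * (π ω)⁻¹, (-1) ^ (ris ω).count t * ε) := by
  induction ω with
  | nil => simp [signedConjWord]
  | cons i ω ih =>
    have hconj : π ω * t * (π ω)⁻¹ = s i ↔ t = (π ω)⁻¹ * s i * π ω := by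
      constructor <;> intro h
      · rw [← h]; group
      · rw [h]; group
    simp only [signedConjWord, map_cons, prod_cons, Equiv.Perm.mul_apply] at ih ⊢
    rw [ih, rightInvSeq_cons, count_cons, wordProd_cons]
    simp only [signedConjPerm, Function.Involutive.coe_toPerm, signedConj, hconj, beq_iff_eq,
      eq_comm (a := t)]
    refine Prod.ext (by simp [mul_assoc]) ?_
    split_ifs <;> simp [pow_succ]

theorem isLiftable_signedConjPerm : M.IsLiftable cs.signedConjPerm := by
  intro i j
  have hword : ∀ m, cs.signedConjWord (alternatingWord i j (2 * m)) =
      (cs.signedConjPerm i * cs.signedConjPerm j) ^ m := by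
    intro m
    induction m with
    | zero => rfl
    | succ m ih =>
      rw [Nat.mul_succ, alternatingWord_succ', alternatingWord_succ',
        if_neg (by simp [parity_simps]), if_pos (by simp [parity_simps]), pow_succ', ← ih]
      simp [signedConjWord, mul_assoc]
  ext ⟨t, ε⟩ : 1
  rw [← hword, signedConjWord_apply, wordProd_alternatingWord_two_mul,
    (cs.even_count_rightInvSeq_alternatingWord i j t).neg_one_pow]
  simp

noncomputable def signedConjHom : W →* Equiv.Perm (W × ℤˣ) :=
  cs.lift ⟨cs.signedConjPerm, cs.isLiftable_signedConjPerm⟩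

theorem signedConjHom_wordProd (ω : List B) : cs.signedConjHom (π ω) = cs.signedConjWord ω := by
  rw [wordProd, map_list_prod, map_map, signedConjWord]
  congr 1
  exact map_congr_left fun i _ => cs.lift_apply_simple cs.isLiftable_signedConjPerm i

noncomputable def inversionSign (w t : W) : ℤˣ := (cs.signedConjHom w (t, 1)).2

theorem inversionSign_wordProd (ω : List B) (t : W) :
    cs.inversionSign (π ω) t = (-1) ^ (ris ω).count t := by
  rw [inversionSign, signedConjHom_wordProd, signedConjWord_apply, mul_one]

theorem signedConjHom_apply (w t : W) (ε : ℤˣ) :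
    cs.signedConjHom w (t, ε) = (w * t * w⁻¹, cs.inversionSign w t * ε) := by
  obtain ⟨ω, rfl⟩ := cs.wordProd_surjective w
  rw [inversionSign_wordProd, signedConjHom_wordProd, signedConjWord_apply]

theorem inversionSign_mul (v w t : W) :
    cs.inversionSign (v * w) t = cs.inversionSign v (w * t * w⁻¹) * cs.inversionSign w t := by
  have h := congrArg Prod.snd (congrArg (· (t, 1)) (map_mul cs.signedConjHom v w))
  simpa only [Equiv.Perm.mul_apply, signedConjHom_apply, mul_one] using h

theorem inversionSign_one (t : W) : cs.inversionSign 1 t = 1 := by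
  simpa using cs.inversionSign_wordProd [] t

theorem inversionSign_simple_self (i : B) : cs.inversionSign (s i) (s i) = -1 := by
  simpa using cs.inversionSign_wordProd [i] (s i)

variable {cs} in
theorem IsReflection.inversionSign_self {t : W} (ht : cs.IsReflection t) :
    cs.inversionSign t t = -1 := by
  obtain ⟨u, i, rfl⟩ := ht
  have hconj : u⁻¹ * (u * s i * u⁻¹) * u⁻¹⁻¹ = s i := by group
  have hcancel := cs.inversionSign_mul u u⁻¹ (u * s i * u⁻¹)
  rw [mul_inv_cancel, inversionSign_one, hconj] at hcancel
  rw [inversionSign_mul, hconj, inversionSign_mul, inv_simple, cs.simple_mul_simple_cancel_right,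
    inversionSign_simple_self, mul_neg_one, neg_mul, ← hcancel]

variable {cs} in
theorem IsReflection.inversionSign_mul_self {t : W} (ht : cs.IsReflection t) (w : W) :
    cs.inversionSign (w * t) t = -cs.inversionSign w t := by
  rw [inversionSign_mul, ht.mul_self, one_mul, ht.inv, ht.inversionSign_self, mul_neg_one]

theorem inversionSign_eq_one_of_length_lt {w t : W} (h : ℓ w < ℓ (w * t)) :
    cs.inversionSign w t = 1 := by
  obtain ⟨ω, hω, rfl⟩ := cs.exists_isReduced w
  have ht : t ∉ ris ω := fun ht => (cs.isRightInversion_of_mem_rightInvSeq hω ht).2.not_gt h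
  rw [inversionSign_wordProd, count_eq_zero_of_not_mem ht, pow_zero]

variable {cs} in
theorem IsRightInversion.inversionSign_eq_neg_one {w t : W} (h : cs.IsRightInversion w t) :
    cs.inversionSign w t = -1 := by
  have hwt : ℓ (w * t) < ℓ (w * t * t) := by rw [mul_assoc, h.1.mul_self, mul_one]; exact h.2
  simpa [mul_assoc, h.1.mul_self, cs.inversionSign_eq_one_of_length_lt hwt] using
    h.1.inversionSign_mul_self (w * t)

variable {cs} in
theorem IsRightInversion.mem_rightInvSeq {ω : List B} {t : W}
    (h : cs.IsRightInversion (π ω) t) : t ∈ ris ω := by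
  have hsign := h.inversionSign_eq_neg_one
  rw [inversionSign_wordProd] at hsign
  rw [← count_pos_iff, Nat.pos_iff_ne_zero]
  intro hzero
  rw [hzero, pow_zero] at hsign
  exact absurd hsign (by decide)

variable {cs} in
theorem IsRightInversion.exists_eraseIdx {ω : List B} {t : W}
    (h : cs.IsRightInversion (π ω) t) : ∃ j < ω.length, π ω * t = π (ω.eraseIdx j) := by
  obtain ⟨j, hj, rfl⟩ := getElem_of_mem h.mem_rightInvSeq
  refine ⟨j, by simpa using hj, ?_⟩
  rw [← getD_eq_getElem _ 1, wordProd_mul_getD_rightInvSeq]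

/-- Steps raising the length by exactly one generate the Bruhat order; with them, the exchanged
word of a step is again reduced, so no deletion argument is needed. -/
def BruhatStep (u w : W) : Prop := ∃ t, cs.IsReflection t ∧ w = u * t ∧ ℓ w = ℓ u + 1

abbrev BruhatChain : W → W → Prop := Relation.ReflTransGen cs.BruhatStep

def SubwordLE (u w : W) : Prop :=
  ∀ ω : List B, cs.IsReduced ω → π ω = w →
    ∃ ω' : List B, ω'.Sublist ω ∧ cs.IsReduced ω' ∧ π ω' = u

theorem bruhatStep_simple_mul {w : W} {i : B} (h : ℓ w < ℓ (s i * w)) :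
    cs.BruhatStep w (s i * w) := by
  refine ⟨w⁻¹ * s i * w, ⟨w⁻¹, i, by group⟩, by group, ?_⟩
  rcases cs.length_simple_mul w i with h' | h' <;> omega

theorem bruhatChain_one (w : W) : cs.BruhatChain 1 w := by
  obtain ⟨ω, hω, rfl⟩ := cs.exists_isReduced w
  induction ω with
  | nil => exact .refl
  | cons i ω ih =>
    have hω' : cs.IsReduced ω := by simpa using hω.drop 1
    rw [wordProd_cons]
    refine (ih hω').tail (cs.bruhatStep_simple_mul ?_)
    rw [IsReduced, wordProd_cons, length_cons] at hω
    rw [IsReduced] at hω'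
    omega

section

variable {cs}

theorem SubwordLE.refl (w : W) : cs.SubwordLE w w :=
  fun ω hω hw => ⟨ω, Sublist.refl ω, hω, hw⟩

theorem SubwordLE.trans {u v w : W} (huv : cs.SubwordLE u v) (hvw : cs.SubwordLE v w) :
    cs.SubwordLE u w := by
  intro ω hω hw
  obtain ⟨ω₁, h₁, hω₁, rfl⟩ := hvw ω hω hw
  obtain ⟨ω₂, h₂, hω₂, rfl⟩ := huv ω₁ hω₁ rfl
  exact ⟨ω₂, h₂.trans h₁, hω₂, rfl⟩

theorem BruhatStep.subwordLE {u w : W} (h : cs.BruhatStep u w) : cs.SubwordLE u w := by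
  obtain ⟨t, ht, rfl, hlen⟩ := h
  intro ω hω hw
  have hinv : cs.IsRightInversion (π ω) t :=
    ⟨ht, by rw [hw, mul_assoc, ht.mul_self, mul_one]; omega⟩
  obtain ⟨j, hj, hj'⟩ := hinv.exists_eraseIdx
  have hu : π (ω.eraseIdx j) = u := by rw [← hj', hw, mul_assoc, ht.mul_self, mul_one]
  refine ⟨ω.eraseIdx j, eraseIdx_sublist ω j, ?_, hu⟩
  have := length_eraseIdx_add_one hj
  rw [IsReduced, hu]
  rw [IsReduced, hw] at hω
  omega

theorem BruhatChain.subwordLE {u w : W} (h : cs.BruhatChain u w) : cs.SubwordLE u w := by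
  induction h with
  | refl => exact .refl u
  | tail _ hstep ih => exact ih.trans hstep.subwordLE

theorem BruhatStep.simple_mul {u z : W} {i : B} (h : cs.BruhatStep u z)
    (hu : ℓ u < ℓ (s i * u)) (hz : ℓ z < ℓ (s i * z)) : cs.BruhatStep (s i * u) (s i * z) := by
  obtain ⟨t, ht, rfl, hlen⟩ := h
  refine ⟨t, ht, (mul_assoc _ _ _).symm, ?_⟩
  rcases cs.length_simple_mul u i with h' | h' <;>
    rcases cs.length_simple_mul (u * t) i with h'' | h'' <;> omega

theorem BruhatStep.simple_mul_eq {u z : W} {i : B} (h : cs.BruhatStep u z)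
    (hu : ℓ u < ℓ (s i * u)) (hz : ℓ (s i * z) < ℓ z) : s i * u = z := by
  obtain ⟨t, ht, rfl, hlen⟩ := h
  obtain ⟨σ, hσ, hσz⟩ := cs.exists_isReduced (s i * (u * t))
  have hut : u * t * t = u := by rw [mul_assoc, ht.mul_self, mul_one]
  have hword : π (i :: σ) = u * t := by rw [wordProd_cons, ← hσz, simple_mul_simple_cancel_left]
  have hinv : cs.IsRightInversion (π (i :: σ)) t := ⟨ht, by rw [hword, hut]; omega⟩
  rcases mem_cons.1 hinv.mem_rightInvSeq with heq | hmem
  · have hu' : u = π σ := by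
      rw [← hut, ← hword, heq, wordProd_cons]
      simp [mul_assoc]
    conv_lhs => rw [hu', ← hσz]
    exact cs.simple_mul_simple_cancel_left i
  · have hlt := (cs.isRightInversion_of_mem_rightInvSeq hσ hmem).2
    rw [← hσz, mul_assoc, hut] at hlt
    rcases cs.length_simple_mul (u * t) i with h' | h' <;> omega

theorem BruhatChain.simple_mul_of_length_lt {u w : W} {i : B} (h : cs.BruhatChain u w)
    (hw : cs.IsLeftDescent w i) (hu : ℓ u < ℓ (s i * u)) : cs.BruhatChain (s i * u) w := by
  induction h using Relation.ReflTransGen.head_induction_on with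
  | refl => exact absurd hw (lt_asymm hu)
  | @head u z hstep hrest ih =>
    rcases (cs.length_simple_mul_ne z i).lt_or_gt with hz | hz
    · rw [hstep.simple_mul_eq hu hz]
      exact hrest
    · exact .head (hstep.simple_mul hu hz) (ih hz)

theorem BruhatChain.simple_mul_of_isLeftDescent {u w : W} {i : B} (h : cs.BruhatChain u w)
    (hw : cs.IsLeftDescent w i) : cs.BruhatChain (s i * u) w := by
  rcases cs.length_simple_mul u i with hu | hu
  · exact h.simple_mul_of_length_lt hw (by omega)
  · have hstep := cs.bruhatStep_simple_mul (w := s i * u) (i := i)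
      (by rw [simple_mul_simple_cancel_left]; omega)
    rw [simple_mul_simple_cancel_left] at hstep
    exact .head hstep h

end

theorem exists_bruhatChain_isLeftDescent (z : W) (i : B) :
    ∃ z', cs.BruhatChain z z' ∧ cs.IsLeftDescent z' i := by
  by_cases hz : cs.IsLeftDescent z i
  · exact ⟨z, .refl, hz⟩
  · rw [not_isLeftDescent_iff] at hz
    refine ⟨s i * z, .single (cs.bruhatStep_simple_mul (by omega)), ?_⟩
    rw [IsLeftDescent, simple_mul_simple_cancel_left]
    omega

theorem directed_bruhatChain : Directed cs.BruhatChain id := by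
  intro u v
  induction v using cs.simple_induction_left with
  | one => exact ⟨u, .refl, cs.bruhatChain_one u⟩
  | mul_simple_left v i ih =>
    obtain ⟨z, huz, hvz⟩ := ih
    obtain ⟨z', hzz', hz'⟩ := cs.exists_bruhatChain_isLeftDescent z i
    exact ⟨z', huz.trans hzz', BruhatChain.simple_mul_of_isLeftDescent (hvz.trans hzz') hz'⟩

end CoxeterSystem

/-- The Bruhat order on a Coxeter group (characterized by the subword property:
`u ≤ w` iff every reduced word for `w` has a sublist that is a reduced word for `u`)
is directed: every finite subset of `W` has an upper bound. -/
theorem stmt1 {B W : Type*} [Group W] {M : CoxeterMatrix B} (cs : CoxeterSystem M W)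
    (bruhatLE : W → W → Prop)
    (hle : ∀ u w : W, bruhatLE u w ↔
      ∀ ω : List B, cs.IsReduced ω → cs.wordProd ω = w →
        ∃ ω' : List B, ω'.Sublist ω ∧ cs.IsReduced ω' ∧ cs.wordProd ω' = u)
    (E : Finset W) :
    ∃ w : W, ∀ v ∈ E, bruhatLE v w := by
  obtain ⟨w, hw⟩ := cs.directed_bruhatChain.finset_le E
  exact ⟨w, fun v hv => (hle v w).mpr (hw v hv).subwordLE⟩
end

section
/- Let V be a finite dimensional vector space over a field F and let E be a set of pairwise commuting triangularizable endomorphisms of V. Then V decomposes as the direct sum, over the (finitely many) simultaneous weights τ : E → F with nonzero weight space, of the generalized weight spaces V(τ, gen) = {v ∈ V | for all e ∈ E there exists k with (e − τ(e)·Id)^k v = 0}. In particular, if V ≠ 0 there exists a simultaneous eigenvector for all elements of E. -/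
/-!
The generalized weight spaces `⨅ e, maxGenEigenspace e (τ e)` are independent, and they span `V`
because each `e` is triangularizable: its characteristic polynomial is a product of powers of
pairwise coprime linear factors, so `V` is the sum of the generalized eigenspaces of `e`. It remains
to see that a nonzero generalized weight space contains a simultaneous eigenvector. Take a minimal
nonzero subspace `W` of it that is invariant under all of `E`. For each `e`, the subspace
`W ⊓ eigenspace e (τ e)` is again invariant, as `E` is commutative, and it is nonzero because
`e - τ e` is nilpotent on `W`; by minimality it is `W`.
-/

open Module Polynomial

namespace Module.End

section CommRing

variable {ι R M : Type*} [CommRing R] [AddCommGroup M] [Module R M]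

theorem ker_aeval_X_sub_C_pow_le_maxGenEigenspace (f : End R M) (μ : R) (k : ℕ) :
    LinearMap.ker (aeval f ((X - C μ) ^ k)) ≤ f.maxGenEigenspace μ :=
  fun v hv => (mem_maxGenEigenspace f μ v).mpr
    ⟨k, by simpa [Algebra.algebraMap_eq_smul_one] using hv⟩

theorem inf_eigenspace_ne_bot_of_le_maxGenEigenspace {f : End R M} {μ : R} {p : Submodule R M}
    (hfp : ∀ x ∈ p, f x ∈ p) (hp : p ≤ f.maxGenEigenspace μ) (hne : p ≠ ⊥) :
    p ⊓ f.eigenspace μ ≠ ⊥ := by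
  have : Nontrivial p := Submodule.nontrivial_iff_ne_bot.mpr hne
  have hgen : HasUnifEigenvalue (f.restrict hfp) μ ⊤ := by
    rw [HasUnifEigenvalue, genEigenspace_restrict, Submodule.comap_subtype_eq_top.mpr hp]
    exact top_ne_bot
  have hone := (hasUnifEigenvalue_iff_hasUnifEigenvalue_one ENat.top_pos).mp hgen
  rwa [HasUnifEigenvalue, genEigenspace_restrict, ne_eq, ← Submodule.disjoint_iff_comap_eq_bot,
    disjoint_iff] at hone

theorem iInf_eigenspace_ne_bot_of_iInf_maxGenEigenspace_ne_bot [IsArtinian R M]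
    {f : ι → End R M} (hc : ∀ i j, Commute (f i) (f j)) {χ : ι → R}
    (h : ⨅ i, (f i).maxGenEigenspace (χ i) ≠ ⊥) : ⨅ i, (f i).eigenspace (χ i) ≠ ⊥ := by
  let P : Submodule R M → Prop := fun W => W ≠ ⊥ ∧
    (∀ i, W ≤ (f i).maxGenEigenspace (χ i)) ∧ ∀ i, W ∈ (f i).invtSubmodule
  have hP : P (⨅ i, (f i).maxGenEigenspace (χ i)) := ⟨h, iInf_le _, fun j _ hx =>
    Submodule.mem_iInf _ |>.2 fun i =>
      mapsTo_maxGenEigenspace_of_comm (hc i j) (χ i) (Submodule.mem_iInf _ |>.1 hx i)⟩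
  obtain ⟨W, ⟨hW, hWgen, hWinv⟩, hWmin⟩ := exists_minimal_of_wellFoundedLT P ⟨_, hP⟩
  have hWeig (i : ι) : W ≤ (f i).eigenspace (χ i) := by
    have : P (W ⊓ (f i).eigenspace (χ i)) :=
      ⟨inf_eigenspace_ne_bot_of_le_maxGenEigenspace (hWinv i) (hWgen i) hW,
        fun j => inf_le_left.trans (hWgen j),
        fun j => Sublattice.inf_mem (hWinv j) (mapsTo_genEigenspace_of_comm (hc i j) (χ i) 1)⟩
    exact (hWmin this inf_le_left).trans inf_le_right
  exact ne_bot_of_le_ne_bot hW (le_iInf hWeig)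

theorem iInf_eigenspace_ne_bot_iff [IsArtinian R M] {f : ι → End R M}
    (hc : ∀ i j, Commute (f i) (f j)) (χ : ι → R) :
    ⨅ i, (f i).eigenspace (χ i) ≠ ⊥ ↔ ⨅ i, (f i).maxGenEigenspace (χ i) ≠ ⊥ :=
  ⟨fun h => ne_bot_of_le_ne_bot h (iInf_mono fun _ => eigenspace_le_maxGenEigenspace),
    iInf_eigenspace_ne_bot_of_iInf_maxGenEigenspace_ne_bot hc⟩

end CommRing

section Field

variable {K V : Type*} [Field K] [AddCommGroup V] [Module K V]

theorem ker_aeval_prod_X_sub_C_pow_le_iSup_maxGenEigenspace (f : End K V) (s : Finset K)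
    (k : K → ℕ) :
    LinearMap.ker (aeval f (∏ μ ∈ s, (X - C μ) ^ k μ)) ≤ ⨆ μ, f.maxGenEigenspace μ := by
  classical
  induction s using Finset.induction_on with
  | empty => simp [one_eq_id]
  | @insert a s ha ih =>
    have hcop : IsCoprime ((X - C a) ^ k a) (∏ μ ∈ s, (X - C μ) ^ k μ) :=
      (IsCoprime.prod_right fun μ hμ => (isCoprime_X_sub_C_of_isUnit_sub
        (sub_ne_zero.2 (ne_of_mem_of_not_mem hμ ha).symm).isUnit).pow_right).pow_left
    rw [Finset.prod_insert ha, ← sup_ker_aeval_eq_ker_aeval_mul_of_coprime f hcop]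
    exact sup_le ((ker_aeval_X_sub_C_pow_le_maxGenEigenspace f a (k a)).trans (le_iSup _ a)) ih

theorem iSup_maxGenEigenspace_eq_top_of_splits [FiniteDimensional K V] {f : End K V}
    (h : f.charpoly.Splits) : ⨆ μ, f.maxGenEigenspace μ = ⊤ := by
  classical
  refine top_le_iff.mp (le_trans ?_ (ker_aeval_prod_X_sub_C_pow_le_iSup_maxGenEigenspace f
    f.charpoly.roots.toFinset fun μ => f.charpoly.roots.count μ))
  rw [← Finset.prod_multiset_map_count, ← h.eq_prod_roots_of_monic f.charpoly_monic,
    LinearMap.aeval_self_charpoly, LinearMap.ker_zero]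

end Field

end Module.End

open Module.End

/-- Let `V` be a finite dimensional vector space over a field `F` and `E` a set of pairwise
commuting triangularizable endomorphisms of `V`. Then the set of simultaneous weights (those
`τ : E → F` whose simultaneous eigenspace is nonzero) is finite, the corresponding generalized
weight spaces `⨅ e ∈ E, maxGenEigenspace e (τ e)` are independent and their sup is all of `V`;
in particular if `V ≠ 0` there is a simultaneous eigenvector for all elements of `E`. -/
theorem stmt4 {F V : Type*} [Field F] [AddCommGroup V] [Module F V] [FiniteDimensional F V]
    (E : Set (Module.End F V))
    (htri : ∀ e ∈ E, (LinearMap.charpoly e).Splits)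
    (hcomm : ∀ e ∈ E, ∀ e' ∈ E, Commute e e') :
    {τ : E → F | (⨅ e : E, Module.End.eigenspace (e : Module.End F V) (τ e)) ≠ ⊥}.Finite ∧
    iSupIndep (fun τ : {τ : E → F //
        (⨅ e : E, Module.End.eigenspace (e : Module.End F V) (τ e)) ≠ ⊥} =>
      ⨅ e : E, Module.End.maxGenEigenspace (e : Module.End F V) (τ.1 e)) ∧
    (⨆ τ : {τ : E → F // (⨅ e : E, Module.End.eigenspace (e : Module.End F V) (τ e)) ≠ ⊥},
      ⨅ e : E, Module.End.maxGenEigenspace (e : Module.End F V) (τ.1 e)) = ⊤ ∧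
    (Nontrivial V → ∃ τ : E → F, ∃ v : V, v ≠ 0 ∧
      ∀ e : E, (e : Module.End F V) v = τ e • v) := by
  have hc (e e' : E) : Commute (e : End F V) e' := hcomm e e.2 e' e'.2
  have hweights : (fun τ : E → F => ⨅ e : E, (e : End F V).eigenspace (τ e) ≠ ⊥) =
      fun τ => ⨅ e : E, (e : End F V).maxGenEigenspace (τ e) ≠ ⊥ :=
    funext fun τ => propext (iInf_eigenspace_ne_bot_iff hc τ)
  have hindep := independent_iInf_maxGenEigenspace_of_forall_mapsTo
    (fun e : E => (e : End F V)) fun e e' μ => mapsTo_maxGenEigenspace_of_comm (hc e' e) μ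
  have htop := iSup_iInf_maxGenEigenspace_eq_top_of_iSup_maxGenEigenspace_eq_top_of_commute
    (fun e : E => (e : End F V)) (fun e e' _ => hc e e')
    fun e => iSup_maxGenEigenspace_eq_top_of_splits (htri e e.2)
  rw [hweights]
  refine ⟨WellFoundedGT.finite_ne_bot_of_iSupIndep hindep, hindep.comp Subtype.val_injective,
    (iSup_ne_bot_subtype _).trans htop, fun _ => ?_⟩
  obtain ⟨τ, hτ⟩ : ∃ τ : E → F, ⨅ e : E, (e : End F V).maxGenEigenspace (τ e) ≠ ⊥ := by
    by_contra! h
    simp [h] at htop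
  obtain ⟨v, hv, hv0⟩ := Submodule.ne_bot_iff _ |>.mp
    ((iInf_eigenspace_ne_bot_iff hc τ).mpr hτ)
  exact ⟨τ, v, hv0, fun e => mem_eigenspace_iff.mp (Submodule.mem_iInf _ |>.mp hv e)⟩
end

section
/- Let (W, S) be the Weyl group of a Kac-Moody root system acting on the real vector space 𝔸, with real coroots Φ∨ and simple coroots (αₛ∨). Suppose w ∈ W satisfies w·λ − λ ∈ ℝ·αₛ∨ for all λ in a W-invariant lattice Y spanning 𝔸, for some fixed s ∈ S. Then w = 1 or w = s. -/
/-- The data of a Kac–Moody root generating system realized on a real vector space `𝔸`: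
a generalized Cartan matrix `A`, simple roots `root i` (linear forms on `𝔸`), simple coroots
`coroot i ∈ 𝔸`, forming free families, with pairing `⟨αⱼ, αᵢ∨⟩ = A i j`, and the simple
reflections `refl i : v ↦ v - αᵢ(v) αᵢ∨`. -/
structure KMData (I : Type*) (𝔸 : Type*) [Fintype I] [AddCommGroup 𝔸] [Module ℝ 𝔸] where
  A : Matrix I I ℤ
  root : I → (𝔸 →ₗ[ℝ] ℝ)
  coroot : I → 𝔸
  pairing : ∀ i j, root j (coroot i) = A i j
  diag : ∀ i, A i i = 2
  offDiag : ∀ i j, i ≠ j → A i j ≤ 0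
  symmZero : ∀ i j, A i j = 0 ↔ A j i = 0
  rootInd : LinearIndependent ℝ root
  corootInd : LinearIndependent ℝ coroot
  refl : I → (𝔸 ≃ₗ[ℝ] 𝔸)
  refl_apply : ∀ i v, refl i v = v - root i v • coroot i

variable {I 𝔸 : Type*} [Fintype I] [AddCommGroup 𝔸] [Module ℝ 𝔸]

/-- The Weyl group: the subgroup of linear automorphisms of `𝔸` generated by the simple
reflections. -/
def KMData.weylGroup (D : KMData I 𝔸) : Subgroup (𝔸 ≃ₗ[ℝ] 𝔸) :=
  Subgroup.closure (Set.range D.refl)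

/-- The Tits cone: the union of the `W`-translates of the closed fundamental chamber. -/
def KMData.titsCone (D : KMData I 𝔸) : Set 𝔸 :=
  {x | ∃ g ∈ D.weylGroup, ∃ y : 𝔸, (∀ i, 0 ≤ D.root i y) ∧ x = g y}

/-!
Since `Y` spans `𝔸`, the hypothesis says `w v - v ∈ ℝ αᵢ∨` for every `v ∈ 𝔸`.

The key input is the positivity of coroots (Humphreys, *Reflection groups and Coxeter groups*,
§5.4): if `ℓ(w rⱼ) ≥ ℓ(w)` then `w αⱼ∨` is a nonnegative combination of simple coroots. It is
proved by induction on `ℓ(w)`, passing through the rank-two subgroup generated by `rⱼ` and a right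
descent `rₖ` of `w`, where it is an explicit computation: braid relations when `Aⱼₖ Aₖⱼ < 4`, a
sign invariant of the coordinates when `Aⱼₖ Aₖⱼ ≥ 4`. Hence a nontrivial `w` sends some `αₖ∨` to a
nonpositive combination, whose `αₖ∨`-coordinate is `≤ 0`.

Here, however, `w αₖ∨ = αₖ∨ + cₖ αᵢ∨` has `αₖ∨`-coordinate `1` for `k ≠ i`, and `w αᵢ∨ = c αᵢ∨`
with `c ≠ 0`. If `c > 0` this forces `w = 1`; if `c < 0` the same argument applied to `rᵢ w`
gives `w = rᵢ`.
-/

namespace CoxeterSystem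

variable {B : Type*}

lemma mem_alternatingWord {x y a : B} {m : ℕ} (ha : a ∈ alternatingWord x y m) :
    a ∈ ({x, y} : Set B) := by
  induction m generalizing x y with
  | zero => simp [alternatingWord] at ha
  | succ m ih =>
    simp only [alternatingWord_succ, List.concat_eq_append, List.mem_append,
      List.mem_singleton] at ha
    rcases ha with ha | rfl
    · rw [Set.pair_comm]; exact ih ha
    · simp

lemma exists_alternatingWord_eq_append {h m : ℕ} (hhm : h ≤ m) (x y : B) :
    ∃ p, alternatingWord x y m = p ++ alternatingWord x y h := by
  induction h generalizing m x y with
  | zero => exact ⟨alternatingWord x y m, by simp [alternatingWord]⟩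
  | succ h ih =>
    obtain ⟨m, rfl⟩ : ∃ m', m = m' + 1 := ⟨m - 1, by omega⟩
    obtain ⟨p, hp⟩ := ih (m := m) (by omega) y x
    exact ⟨p, by simp [alternatingWord_succ, hp]⟩

end CoxeterSystem

open CoxeterSystem (alternatingWord alternatingWord_succ alternatingWord_succ'
  length_alternatingWord mem_alternatingWord exists_alternatingWord_eq_append)

namespace KMData

variable (D : KMData I 𝔸)

section Reflections

lemma root_coroot_self (i : I) : D.root i (D.coroot i) = 2 := by
  rw [D.pairing, D.diag]; norm_num

lemma refl_coroot_self (i : I) : D.refl i (D.coroot i) = -D.coroot i := by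
  rw [D.refl_apply, root_coroot_self]; module

@[simp] lemma refl_mul_self (i : I) : D.refl i * D.refl i = 1 := by
  ext v
  simp only [LinearEquiv.mul_apply, D.refl_apply, map_sub, map_smul, root_coroot_self,
    smul_eq_mul, LinearEquiv.coe_one, id_eq]
  module

@[simp] lemma mul_refl_mul_refl (g : 𝔸 ≃ₗ[ℝ] 𝔸) (i : I) : g * D.refl i * D.refl i = g := by
  rw [mul_assoc, refl_mul_self, mul_one]

lemma refl_inv (i : I) : (D.refl i)⁻¹ = D.refl i :=
  inv_eq_of_mul_eq_one_right (D.refl_mul_self i)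

lemma refl_mem_weylGroup (i : I) : D.refl i ∈ D.weylGroup :=
  Subgroup.subset_closure ⟨i, rfl⟩

end Reflections

section Words

def word (l : List I) : 𝔸 ≃ₗ[ℝ] 𝔸 := (l.map D.refl).prod

@[simp] lemma word_nil : D.word [] = 1 := rfl

@[simp] lemma word_cons (a : I) (l : List I) : D.word (a :: l) = D.refl a * D.word l := by
  simp [word]

@[simp] lemma word_append (l₁ l₂ : List I) : D.word (l₁ ++ l₂) = D.word l₁ * D.word l₂ := by
  simp [word]

@[simp] lemma word_concat (l : List I) (a : I) : D.word (l.concat a) = D.word l * D.refl a := by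
  simp [word]

lemma word_mem_weylGroup (l : List I) : D.word l ∈ D.weylGroup :=
  Subgroup.list_prod_mem (K := D.weylGroup) (by simpa using fun i _ => D.refl_mem_weylGroup i)

lemma mem_weylGroup_iff {g : 𝔸 ≃ₗ[ℝ] 𝔸} : g ∈ D.weylGroup ↔ ∃ l, D.word l = g := by
  refine ⟨fun hg => ?_, fun ⟨l, hl⟩ => hl ▸ D.word_mem_weylGroup l⟩
  induction hg using Subgroup.closure_induction'' with
  | mem _ hx | inv_mem _ hx => obtain ⟨i, rfl⟩ := hx; exact ⟨[i], by simp [refl_inv]⟩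
  | one => exact ⟨[], rfl⟩
  | mul _ _ _ _ h₁ h₂ =>
    obtain ⟨l₁, rfl⟩ := h₁
    obtain ⟨l₂, rfl⟩ := h₂
    exact ⟨l₁ ++ l₂, D.word_append l₁ l₂⟩

end Words

section Length

-- `sInf ∅ = 0`: only meaningful for `g` in the subgroup generated by `S`.
noncomputable def lengthIn (S : Set I) (g : 𝔸 ≃ₗ[ℝ] 𝔸) : ℕ :=
  sInf {n | ∃ l : List I, (∀ a ∈ l, a ∈ S) ∧ l.length = n ∧ D.word l = g}

variable {D} {S : Set I} {l : List I}

lemma lengthIn_word_le (hl : ∀ a ∈ l, a ∈ S) : D.lengthIn S (D.word l) ≤ l.length :=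
  Nat.sInf_le ⟨l, hl, rfl, rfl⟩

lemma exists_word_length_eq_lengthIn (hl : ∀ a ∈ l, a ∈ S) :
    ∃ l' : List I, (∀ a ∈ l', a ∈ S) ∧ D.word l' = D.word l ∧
      l'.length = D.lengthIn S (D.word l) := by
  obtain ⟨l', hl', hlen, hw⟩ := Nat.sInf_mem (⟨_, l, hl, rfl, rfl⟩ :
    {n | ∃ l' : List I, (∀ a ∈ l', a ∈ S) ∧ l'.length = n ∧ D.word l' = D.word l}.Nonempty)
  exact ⟨l', hl', hw, hlen⟩

variable (D) in
noncomputable abbrev length (g : 𝔸 ≃ₗ[ℝ] 𝔸) : ℕ := D.lengthIn Set.univ g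

variable {g : 𝔸 ≃ₗ[ℝ] 𝔸}

lemma length_word_le (l : List I) : D.length (D.word l) ≤ l.length :=
  lengthIn_word_le fun _ _ => trivial

lemma exists_reduced_word (hg : g ∈ D.weylGroup) :
    ∃ l : List I, D.word l = g ∧ l.length = D.length g := by
  obtain ⟨l, rfl⟩ := D.mem_weylGroup_iff.1 hg
  obtain ⟨l', -, hw, hlen⟩ := exists_word_length_eq_lengthIn (S := Set.univ) (D := D) (l := l)
    fun _ _ => trivial
  exact ⟨l', hw, hlen⟩

lemma length_mul_word_le (hg : g ∈ D.weylGroup) (l : List I) :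
    D.length (g * D.word l) ≤ D.length g + l.length := by
  obtain ⟨l', rfl, hlen⟩ := exists_reduced_word hg
  simpa [hlen] using length_word_le (D := D) (l' ++ l)

lemma length_le_length_mul_refl_add_one (hg : g ∈ D.weylGroup) (a : I) :
    D.length g ≤ D.length (g * D.refl a) + 1 := by
  simpa using length_mul_word_le (mul_mem hg (D.refl_mem_weylGroup a)) [a]

lemma exists_length_mul_refl_lt (hg : g ∈ D.weylGroup) (h1 : g ≠ 1) :
    ∃ k, D.length (g * D.refl k) < D.length g := by
  obtain ⟨l, rfl, hlen⟩ := exists_reduced_word hg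
  obtain ⟨l₀, k, rfl⟩ := (List.eq_nil_or_concat l).resolve_left (by rintro rfl; exact h1 rfl)
  refine ⟨k, ?_⟩
  rw [word_concat, mul_refl_mul_refl]
  rw [List.length_concat, word_concat] at hlen
  have := length_word_le (D := D) l₀
  omega

lemma exists_minimal_mul_word (S : Set I) (hg : g ∈ D.weylGroup) :
    ∃ v ∈ D.weylGroup, ∃ c : List I, (∀ a ∈ c, a ∈ S) ∧ g = v * D.word c ∧
      D.length g = D.length v + c.length ∧ ∀ a ∈ S, D.length v ≤ D.length (v * D.refl a) := by
  obtain ⟨n, hn⟩ : ∃ n, D.length g = n := ⟨_, rfl⟩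
  induction n using Nat.strong_induction_on generalizing g with
  | _ n ih =>
  by_cases hdesc : ∃ a ∈ S, D.length (g * D.refl a) < D.length g
  · obtain ⟨a, ha, hlt⟩ := hdesc
    obtain ⟨v, hv, c, hc, hgv, hlen, hmin⟩ :=
      ih _ (hn ▸ hlt) (mul_mem hg (D.refl_mem_weylGroup a)) rfl
    have := length_le_length_mul_refl_add_one hg a
    refine ⟨v, hv, c.concat a, ?_, ?_, ?_, hmin⟩
    · simpa [or_imp, forall_and] using ⟨hc, ha⟩
    · rw [word_concat, ← mul_assoc, ← hgv, mul_refl_mul_refl]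
    · simp only [List.length_concat]
      omega
  · push Not at hdesc
    exact ⟨g, hg, [], by simp, by simp, by simp, hdesc⟩

end Length

section Dihedral

variable {D} {s t : I}

lemma word_alternatingWord_mul_refl {x y a : I} (ha : a = x ∨ a = y) (m : ℕ) :
    ∃ m' ≤ m + 1, D.word (alternatingWord x y m) * D.refl a = D.word (alternatingWord x y m') ∨
      D.word (alternatingWord x y m) * D.refl a = D.word (alternatingWord y x m') := by
  rcases ha with rfl | rfl
  · exact ⟨m + 1, le_rfl, Or.inr (by simp [alternatingWord_succ])⟩
  · rcases m with _ | m
    · exact ⟨1, le_rfl, Or.inl (by simp [alternatingWord])⟩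
    · exact ⟨m, by omega, Or.inr (by simp [alternatingWord_succ])⟩

lemma exists_word_eq_word_alternatingWord {l : List I} (hl : ∀ a ∈ l, a ∈ ({s, t} : Set I)) :
    ∃ m ≤ l.length, D.word l = D.word (alternatingWord s t m) ∨
      D.word l = D.word (alternatingWord t s m) := by
  induction l using List.reverseRecOn with
  | nil => exact ⟨0, le_rfl, Or.inl rfl⟩
  | append_singleton l a ih =>
    simp only [List.mem_append, List.mem_singleton, Set.mem_insert_iff,
      Set.mem_singleton_iff] at hl
    obtain ⟨m, hm, hw⟩ := ih fun b hb => by simpa using hl b (Or.inl hb)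
    have ha := hl a (Or.inr rfl)
    rw [← List.concat_eq_append, word_concat, List.length_concat]
    rcases hw with hw | hw
    · obtain ⟨m', hm', hw'⟩ := word_alternatingWord_mul_refl (D := D) ha m
      exact ⟨m', by omega, hw ▸ hw'⟩
    · obtain ⟨m', hm', hw'⟩ := word_alternatingWord_mul_refl (D := D) ha.symm m
      exact ⟨m', by omega, hw ▸ hw'.symm⟩

lemma lengthIn_word_alternatingWord_le (m : ℕ) :
    D.lengthIn {s, t} (D.word (alternatingWord s t m)) ≤ m := by
  simpa using lengthIn_word_le (D := D) fun a ha => mem_alternatingWord ha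

variable {l : List I}

-- A reduced word in `s, t` is alternating, and it ends in `t` since `rₛ` is not a right descent.
lemma word_eq_word_alternatingWord_of_lengthIn_le (hl : ∀ a ∈ l, a ∈ ({s, t} : Set I))
    (hls : D.lengthIn {s, t} (D.word l) ≤ D.lengthIn {s, t} (D.word l * D.refl s)) :
    D.word l = D.word (alternatingWord s t (D.lengthIn {s, t} (D.word l))) := by
  obtain ⟨l', hl', hw, hlen⟩ := exists_word_length_eq_lengthIn (D := D) hl
  rw [← hw] at hls hlen ⊢
  obtain ⟨m, hm, hwm⟩ := exists_word_eq_word_alternatingWord (D := D) hl'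
  have hlm : D.lengthIn {s, t} (D.word l') ≤ m := by
    rcases hwm with hwm | hwm <;> rw [hwm]
    · exact lengthIn_word_alternatingWord_le m
    · rw [Set.pair_comm]; exact lengthIn_word_alternatingWord_le m
  obtain rfl : m = D.lengthIn {s, t} (D.word l') := by omega
  rcases hwm with hst | hts
  · exact hst
  rcases hm' : D.lengthIn {s, t} (D.word l') with _ | m'
  · simpa [hm', alternatingWord] using hts
  · rw [hm', alternatingWord_succ, word_concat] at hts
    rw [hts] at hls hm'
    rw [mul_refl_mul_refl] at hls
    have := lengthIn_word_alternatingWord_le (D := D) (s := s) (t := t) m'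
    omega

lemma lengthIn_lt_of_braid {h : ℕ} (hh : 0 < h)
    (hbraid : D.word (alternatingWord s t h) = D.word (alternatingWord t s h))
    (hl : ∀ a ∈ l, a ∈ ({s, t} : Set I))
    (hls : D.lengthIn {s, t} (D.word l) ≤ D.lengthIn {s, t} (D.word l * D.refl s)) :
    D.lengthIn {s, t} (D.word l) < h := by
  have hlm := word_eq_word_alternatingWord_of_lengthIn_le hl hls
  set m := D.lengthIn {s, t} (D.word l)
  -- Otherwise the last `h` letters can be braided into a word ending in `s`.
  by_contra! hhm
  obtain ⟨p, hp⟩ := exists_alternatingWord_eq_append hhm s t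
  obtain ⟨h, rfl⟩ : ∃ h', h = h' + 1 := ⟨h - 1, by omega⟩
  have hls' : D.word l * D.refl s = D.word (p ++ alternatingWord s t h) := by
    rw [hlm, hp, word_append, hbraid, alternatingWord_succ, word_concat, word_append, ← mul_assoc,
      mul_refl_mul_refl]
  have hpl : ∀ a ∈ p ++ alternatingWord s t h, a ∈ ({s, t} : Set I) := by
    intro a ha
    rcases List.mem_append.1 ha with ha | ha
    · exact mem_alternatingWord (hp ▸ List.mem_append_left _ ha : a ∈ alternatingWord s t m)
    · exact mem_alternatingWord ha
  have hlen := congrArg List.length hp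
  have := lengthIn_word_le (D := D) hpl
  rw [← hls'] at this
  simp only [List.length_append, length_alternatingWord] at hlen this
  omega

-- The coordinates of `D.word (alternatingWord s t m) (D.coroot s)` in the basis `(αₛ∨, αₜ∨)`
-- when `B = -A s t` and `C = -A t s`.
noncomputable def dihedralCoeff (B C : ℝ) : ℕ → ℝ × ℝ
  | 0 => (1, 0)
  | m + 1 =>
    let (p, q) := dihedralCoeff B C m
    if Even m then (p, B * p - q) else (C * q - p, q)

lemma dihedralCoeff_succ (B C : ℝ) (m : ℕ) : dihedralCoeff B C (m + 1) =
    if Even m then ((dihedralCoeff B C m).1, B * (dihedralCoeff B C m).1 - (dihedralCoeff B C m).2)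
    else (C * (dihedralCoeff B C m).2 - (dihedralCoeff B C m).1, (dihedralCoeff B C m).2) := rfl

lemma dihedralCoeff_nonneg {B C : ℝ} (hB : 0 ≤ B) (hC : 0 ≤ C) (hBC : 4 ≤ B * C) (m : ℕ) :
    0 ≤ (dihedralCoeff B C m).1 ∧ 0 ≤ (dihedralCoeff B C m).2 := by
  suffices ∀ m, 0 ≤ (dihedralCoeff B C m).1 ∧ 0 ≤ (dihedralCoeff B C m).2 ∧
      (Even m → 2 * (dihedralCoeff B C m).2 ≤ B * (dihedralCoeff B C m).1) ∧
      (¬Even m → 2 * (dihedralCoeff B C m).1 ≤ C * (dihedralCoeff B C m).2) from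
    ⟨(this m).1, (this m).2.1⟩
  intro m
  induction m with
  | zero => simp [dihedralCoeff, hB]
  | succ m ih =>
    obtain ⟨hp, hq, hev, hodd⟩ := ih
    rw [dihedralCoeff_succ]
    by_cases hm : Even m
    · have h2q := hev hm
      simp only [hm, ↓reduceIte, Nat.even_add_one, not_true_eq_false, not_false_eq_true,
        false_implies, true_implies, true_and]
      refine ⟨hp, by linarith, ?_⟩
      nlinarith [mul_nonneg hC (sub_nonneg.2 h2q), mul_nonneg (sub_nonneg.2 hBC) hp]
    · have h2p := hodd hm
      simp only [hm, ↓reduceIte, Nat.even_add_one, not_false_eq_true, not_true_eq_false,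
        false_implies, true_implies, and_true]
      refine ⟨by linarith, hq, ?_⟩
      nlinarith [mul_nonneg hB (sub_nonneg.2 h2p), mul_nonneg (sub_nonneg.2 hBC) hq]

lemma word_alternatingWord_apply_coroot (m : ℕ) :
    D.word (alternatingWord s t m) (D.coroot s) =
      (dihedralCoeff (-D.A s t) (-D.A t s) m).1 • D.coroot s +
      (dihedralCoeff (-D.A s t) (-D.A t s) m).2 • D.coroot t := by
  induction m with
  | zero => simp [alternatingWord, dihedralCoeff]
  | succ m ih =>
    rw [alternatingWord_succ', word_cons, LinearEquiv.mul_apply, ih, dihedralCoeff_succ]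
    split_ifs <;>
    · simp only [D.refl_apply, map_add, map_smul, D.pairing, D.diag, smul_eq_mul]
      push_cast
      module

-- The triples `(A s t, A t s, h)` of the rank-two Cartan matrices of finite type, where `h` is
-- the order of `rₛ rₜ`.
def finiteRankTwoTypes : List (ℤ × ℤ × ℕ) :=
  [(0, 0, 2), (-1, -1, 3), (-1, -2, 4), (-2, -1, 4), (-1, -3, 6), (-3, -1, 6)]

lemma dihedralCoeff_nonneg_of_mem_finiteRankTwoTypes {a b : ℤ} {h m : ℕ}
    (hab : (a, b, h) ∈ finiteRankTwoTypes) (hm : m < h) :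
    0 ≤ (dihedralCoeff (-a) (-b) m).1 ∧ 0 ≤ (dihedralCoeff (-a) (-b) m).2 := by
  simp only [finiteRankTwoTypes, List.mem_cons, Prod.mk.injEq, List.not_mem_nil, or_false] at hab
  rcases hab with ⟨rfl, rfl, rfl⟩ | ⟨rfl, rfl, rfl⟩ | ⟨rfl, rfl, rfl⟩ | ⟨rfl, rfl, rfl⟩ |
    ⟨rfl, rfl, rfl⟩ | ⟨rfl, rfl, rfl⟩ <;>
    interval_cases m <;> norm_num [dihedralCoeff, Nat.even_iff]

lemma word_alternatingWord_braid {h : ℕ} (hst : (D.A s t, D.A t s, h) ∈ finiteRankTwoTypes) :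
    D.word (alternatingWord s t h) = D.word (alternatingWord t s h) := by
  simp only [finiteRankTwoTypes, List.mem_cons, Prod.mk.injEq, List.not_mem_nil, or_false] at hst
  ext v
  rcases hst with ⟨hs, ht, rfl⟩ | ⟨hs, ht, rfl⟩ | ⟨hs, ht, rfl⟩ | ⟨hs, ht, rfl⟩ |
    ⟨hs, ht, rfl⟩ | ⟨hs, ht, rfl⟩ <;>
  · simp only [alternatingWord, List.concat_eq_append, word_append, word_cons, word_nil,
      mul_one, one_mul, LinearEquiv.mul_apply, D.refl_apply, map_sub, map_smul, D.pairing, D.diag,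
      hs, ht, smul_eq_mul]
    match_scalars <;> ring

lemma exists_mem_finiteRankTwoTypes (hst : s ≠ t) (h4 : D.A s t * D.A t s < 4) :
    ∃ h > 0, (D.A s t, D.A t s, h) ∈ finiteRankTwoTypes := by
  have hs := D.offDiag s t hst
  have ht := D.offDiag t s hst.symm
  have hzero := D.symmZero s t
  have : -3 ≤ D.A s t := by rcases ht.lt_or_eq with ht | ht <;> simp_all; nlinarith
  have : -3 ≤ D.A t s := by rcases hs.lt_or_eq with hs | hs <;> simp_all; nlinarith
  interval_cases hs' : D.A s t <;> interval_cases ht' : D.A t s <;> simp_all [finiteRankTwoTypes]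

theorem exists_nonneg_word_apply_coroot_eq (hst : s ≠ t) (hl : ∀ a ∈ l, a ∈ ({s, t} : Set I))
    (hls : D.lengthIn {s, t} (D.word l) ≤ D.lengthIn {s, t} (D.word l * D.refl s)) :
    ∃ p q : ℝ, 0 ≤ p ∧ 0 ≤ q ∧ D.word l (D.coroot s) = p • D.coroot s + q • D.coroot t := by
  set m := D.lengthIn {s, t} (D.word l)
  obtain ⟨hp, hq⟩ : 0 ≤ (dihedralCoeff (-D.A s t) (-D.A t s) m).1 ∧
      0 ≤ (dihedralCoeff (-D.A s t) (-D.A t s) m).2 := by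
    by_cases h4 : 4 ≤ D.A s t * D.A t s
    · have hs : (D.A s t : ℝ) ≤ 0 := by exact_mod_cast D.offDiag s t hst
      have ht : (D.A t s : ℝ) ≤ 0 := by exact_mod_cast D.offDiag t s hst.symm
      have h4' : (4 : ℝ) ≤ D.A s t * D.A t s := by exact_mod_cast h4
      exact dihedralCoeff_nonneg (by linarith) (by linarith) (by rwa [neg_mul_neg]) m
    · obtain ⟨h, hh, hmem⟩ := exists_mem_finiteRankTwoTypes hst (not_le.1 h4)
      exact dihedralCoeff_nonneg_of_mem_finiteRankTwoTypes hmem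
        (lengthIn_lt_of_braid hh (word_alternatingWord_braid hmem) hl hls)
  refine ⟨_, _, hp, hq, ?_⟩
  rw [word_eq_word_alternatingWord_of_lengthIn_le hl hls, word_alternatingWord_apply_coroot]

end Dihedral

section Positivity

def corootCone : PointedCone ℝ 𝔸 := PointedCone.hull ℝ (Set.range D.coroot)

variable {D}

lemma coroot_mem_corootCone (i : I) : D.coroot i ∈ D.corootCone :=
  PointedCone.subset_hull ⟨i, rfl⟩

variable {S : Set I} {v w : 𝔸 ≃ₗ[ℝ] 𝔸} {c : List I} {j : I}

lemma lengthIn_le_lengthIn_mul_refl_of_length_mul_word (hv : v ∈ D.weylGroup)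
    (hc : ∀ a ∈ c, a ∈ S) (hlen : D.length (v * D.word c) = D.length v + c.length) (hj : j ∈ S)
    (hvcj : D.length (v * D.word c) ≤ D.length (v * D.word c * D.refl j)) :
    D.lengthIn S (D.word c) ≤ D.lengthIn S (D.word c * D.refl j) := by
  by_contra! hlt
  obtain ⟨c', -, hw', hlen'⟩ := exists_word_length_eq_lengthIn (D := D) (l := c.concat j)
    (by simpa [or_imp, forall_and] using ⟨hc, hj⟩)
  rw [word_concat] at hw' hlen'
  have h1 := length_mul_word_le hv c'
  rw [hw', ← mul_assoc] at h1
  have h2 := lengthIn_word_le (D := D) hc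
  omega

theorem apply_coroot_mem_corootCone (hw : w ∈ D.weylGroup)
    (hj : D.length w ≤ D.length (w * D.refl j)) : w (D.coroot j) ∈ D.corootCone := by
  obtain ⟨n, hn⟩ : ∃ n, D.length w = n := ⟨_, rfl⟩
  induction n using Nat.strong_induction_on generalizing w j with
  | _ n ih =>
  by_cases h1 : w = 1
  · subst h1; exact D.coroot_mem_corootCone j
  obtain ⟨k, hk⟩ := exists_length_mul_refl_lt hw h1
  have hjk : j ≠ k := by rintro rfl; omega
  obtain ⟨v, hv, c, hc, rfl, hlen, hvmin⟩ := exists_minimal_mul_word {j, k} hw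
  have hc0 : c ≠ [] := by
    rintro rfl
    have := hvmin k (by simp)
    simp only [word_nil, mul_one] at hk
    omega
  have hvn : D.length v < n := by
    have := List.length_pos_of_ne_nil hc0
    omega
  obtain ⟨p, q, hp, hq, hpq⟩ := exists_nonneg_word_apply_coroot_eq hjk hc
    (lengthIn_le_lengthIn_mul_refl_of_length_mul_word hv hc hlen (by simp) hj)
  rw [LinearEquiv.mul_apply, hpq, map_add, map_smul, map_smul]
  exact add_mem (D.corootCone.smul_mem hp (ih _ hvn hv (hvmin j (by simp)) rfl))
    (D.corootCone.smul_mem hq (ih _ hvn hv (hvmin k (by simp)) rfl))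

theorem exists_neg_apply_coroot_mem_corootCone (hw : w ∈ D.weylGroup) (h1 : w ≠ 1) :
    ∃ k, -w (D.coroot k) ∈ D.corootCone := by
  obtain ⟨k, hk⟩ := exists_length_mul_refl_lt hw h1
  refine ⟨k, ?_⟩
  have := apply_coroot_mem_corootCone (mul_mem hw (D.refl_mem_weylGroup k)) (j := k)
    (by rw [mul_refl_mul_refl]; omega)
  rwa [LinearEquiv.mul_apply, refl_coroot_self, map_neg] at this

end Positivity

section Coordinates

noncomputable def corootCoord (k : I) : 𝔸 →ₗ[ℝ] ℝ :=
  (LinearMap.exists_extend ((Module.Basis.span D.corootInd).coord k)).choose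

variable {D}

lemma corootCoord_coroot (k j : I) : D.corootCoord k (D.coroot j) = Finsupp.single j 1 k := by
  have h := LinearMap.congr_fun
    (LinearMap.exists_extend ((Module.Basis.span D.corootInd).coord k)).choose_spec
    (Module.Basis.span D.corootInd j)
  simpa [corootCoord] using h

lemma corootCoord_coroot_self (k : I) : D.corootCoord k (D.coroot k) = 1 := by
  simp [corootCoord_coroot]

lemma corootCoord_coroot_of_ne {j k : I} (h : j ≠ k) : D.corootCoord k (D.coroot j) = 0 := by
  simp [corootCoord_coroot, h]

lemma corootCoord_nonneg {v : 𝔸} (hv : v ∈ D.corootCone) (k : I) : 0 ≤ D.corootCoord k v := by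
  induction hv using Submodule.span_induction with
  | mem _ hx =>
    obtain ⟨j, rfl⟩ := hx
    rcases eq_or_ne j k with rfl | hjk
    · simp [corootCoord_coroot_self]
    · simp [corootCoord_coroot_of_ne hjk]
  | zero => simp
  | add _ _ _ _ hx hy => rw [map_add]; exact add_nonneg hx hy
  | smul a x _ hx =>
    change 0 ≤ D.corootCoord k ((a : ℝ) • x)
    rw [map_smul, smul_eq_mul]
    exact mul_nonneg a.2 hx

variable {w : 𝔸 ≃ₗ[ℝ] 𝔸}

theorem eq_one_of_forall_corootCoord_pos (hw : w ∈ D.weylGroup)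
    (h : ∀ k, 0 < D.corootCoord k (w (D.coroot k))) : w = 1 := by
  by_contra h1
  obtain ⟨k, hk⟩ := exists_neg_apply_coroot_mem_corootCone hw h1
  have := corootCoord_nonneg hk k
  rw [map_neg] at this
  linarith [h k]

variable {i : I}

lemma eq_one_of_forall_sub_mem_span (hw : w ∈ D.weylGroup) (h : ∀ v, w v - v ∈ ℝ ∙ D.coroot i)
    {c : ℝ} (hc : 0 < c) (hwi : w (D.coroot i) = c • D.coroot i) : w = 1 := by
  refine eq_one_of_forall_corootCoord_pos hw fun k => ?_
  by_cases hki : k = i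
  · subst hki
    simpa [hwi, corootCoord_coroot_self] using hc
  · obtain ⟨a, ha⟩ := Submodule.mem_span_singleton.1 (h (D.coroot k))
    rw [← sub_add_cancel (w (D.coroot k)) (D.coroot k), ← ha, map_add, map_smul,
      corootCoord_coroot_of_ne (Ne.symm hki), corootCoord_coroot_self]
    norm_num

lemma refl_mul_sub_mem_span (h : ∀ v, w v - v ∈ ℝ ∙ D.coroot i) (v : 𝔸) :
    (D.refl i * w) v - v ∈ ℝ ∙ D.coroot i := by
  have : (D.refl i * w) v - v = (w v - v) - D.root i (w v) • D.coroot i := by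
    rw [LinearEquiv.mul_apply, D.refl_apply]; abel
  rw [this]
  exact sub_mem (h v) (Submodule.smul_mem _ _ (Submodule.mem_span_singleton_self _))

theorem eq_one_or_eq_refl_of_forall_sub_mem_span (hw : w ∈ D.weylGroup)
    (h : ∀ v, w v - v ∈ ℝ ∙ D.coroot i) : w = 1 ∨ w = D.refl i := by
  obtain ⟨a, ha⟩ := Submodule.mem_span_singleton.1 (h (D.coroot i))
  have hwi : w (D.coroot i) = (a + 1) • D.coroot i := by rw [add_smul, one_smul, ha, sub_add_cancel]
  rcases lt_trichotomy (a + 1) 0 with hneg | hzero | hpos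
  · right
    have hiw : D.refl i * w = 1 :=
      eq_one_of_forall_sub_mem_span (mul_mem (D.refl_mem_weylGroup i) hw)
        (refl_mul_sub_mem_span h) (neg_pos.2 hneg)
        (by rw [LinearEquiv.mul_apply, hwi, map_smul, refl_coroot_self, smul_neg, neg_smul])
    rw [eq_inv_of_mul_eq_one_right hiw, refl_inv]
  · rw [hzero, zero_smul] at hwi
    exact absurd (w.map_eq_zero_iff.1 hwi) (D.corootInd.ne_zero i)
  · exact Or.inl (eq_one_of_forall_sub_mem_span hw h hpos hwi)

end Coordinates

end KMData

theorem stmt8_general (D : KMData I 𝔸) (Y : AddSubgroup 𝔸)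
    (hspan : Submodule.span ℝ (Y : Set 𝔸) = ⊤)
    (w : 𝔸 ≃ₗ[ℝ] 𝔸) (hw : w ∈ D.weylGroup) (i : I)
    (h : ∀ lam ∈ Y, ∃ c : ℝ, w lam - lam = c • D.coroot i) :
    w = 1 ∨ w = D.refl i := by
  refine D.eq_one_or_eq_refl_of_forall_sub_mem_span hw fun v => ?_
  have hY : Submodule.span ℝ (Y : Set 𝔸) ≤
      (ℝ ∙ D.coroot i).comap (w.toLinearMap - LinearMap.id) :=
    Submodule.span_le.2 fun y hy => by
      obtain ⟨c, hc⟩ := h y hy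
      exact Submodule.mem_span_singleton.2 ⟨c, hc.symm⟩
  rw [hspan] at hY
  simpa using hY (Submodule.mem_top (x := v))

/-- If `w` is an element of the Weyl group of a Kac–Moody root system such that
`w·λ − λ ∈ ℝ·αₛ∨` for all `λ` in a `W`-invariant lattice `Y` spanning `𝔸`, then
`w = 1` or `w = s` (the simple reflection associated to `αₛ∨`). -/
theorem stmt8 (D : KMData I 𝔸) (Y : AddSubgroup 𝔸)
    (hspan : Submodule.span ℝ (Y : Set 𝔸) = ⊤)
    (hinv : ∀ g ∈ D.weylGroup, ∀ y ∈ Y, g y ∈ Y)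
    (w : 𝔸 ≃ₗ[ℝ] 𝔸) (hw : w ∈ D.weylGroup) (i : I)
    (h : ∀ lam ∈ Y, ∃ c : ℝ, w lam - lam = c • D.coroot i) :
    w = 1 ∨ w = D.refl i :=
  stmt8_general D Y hspan w hw i h
end

section
/- Let τ ∈ T_F and let M be a nonzero submodule of the principal series module I_τ over the Hecke algebra H_{W} of an infinite Coxeter group W (acting via the H_w). Then M is infinite dimensional over F. Consequently, no nonzero finite dimensional H-module embeds into any I_τ. -/
/-!
The classes of the `T w` form a basis of `I_τ = H ⧸ J`: the `T w * Z λ` form a basis of `H`,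
since by the Bernstein relation the change of basis from the `Z λ * T w` is unitriangular for
the length filtration, and the functional `T w * Z λ ↦ τ λ • e_w` vanishes on `J`. In this basis
`T (s i)` sends `T w` to `T (s i * w)` when `ℓ (s i * w) > ℓ w`, and into the span of `T w` and
`T (s i * w)` otherwise. Hence if `w` is a longest element of the support of `x` and `s i * w` is
longer than `w`, then `T (s i) • x` has `s i * w` in its support. In an infinite Coxeter group every
element has such an ascent: an element having every simple reflection as a left descent bounds
the length of all elements, by the strong exchange condition (proved via the reflection
cocycle). So a nonzero subspace stable under the `T w` has elements of unbounded support length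
and is infinite dimensional.
-/

open Submodule

section Triangular

variable {R ι M : Type*} [Ring R] [AddCommGroup M] [Module R M] (d : ι → ℕ)

theorem span_range_le_of_sub_mem_span_lt {b v : ι → M}
    (hv : ∀ i, v i - b i ∈ span R (b '' {j | d j < d i})) :
    span R (Set.range b) ≤ span R (Set.range v) := by
  suffices h : ∀ n i, d i = n → b i ∈ span R (Set.range v) from
    span_le.mpr (Set.range_subset_iff.mpr fun i => h _ i rfl)
  intro n
  induction n using Nat.strong_induction_on with
  | _ n ih =>
    rintro i rfl
    have hlow : span R (b '' {j | d j < d i}) ≤ span R (Set.range v) :=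
      span_le.mpr (by rintro _ ⟨j, hj, rfl⟩; exact ih _ hj j rfl)
    rw [← sub_sub_cancel (v i) (b i)]
    exact sub_mem (subset_span ⟨i, rfl⟩) (hlow (hv i))

theorem Module.Basis.linearIndependent_of_sub_mem_span_lt (b : Module.Basis ι R M) {v : ι → M}
    (hv : ∀ i, v i - b i ∈ span R (b '' {j | d j < d i})) : LinearIndependent R v := by
  classical
  rw [linearIndependent_iff]
  intro l hl
  by_contra hl0
  obtain ⟨i₀, hi₀, hmax⟩ := l.support.exists_max_image d (Finsupp.support_nonempty_iff.mpr hl0)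
  have hsplit : Finsupp.linearCombination R v l =
      Finsupp.linearCombination R b l + Finsupp.linearCombination R (fun i => v i - b i) l := by
    simp [Finsupp.linearCombination_apply, Finsupp.sum, smul_sub]
  have hlow : Finsupp.linearCombination R (fun i => v i - b i) l ∈
      span R (b '' {j | d j < d i₀}) := by
    refine sum_mem fun i hi => smul_mem _ _ (span_mono (Set.image_mono fun j hj => ?_) (hv i))
    exact lt_of_lt_of_le hj (hmax i hi)
  have h0 := congrArg (fun x => b.repr x i₀) hsplit
  simp only [hl, map_zero, Finsupp.coe_zero, Pi.zero_apply, map_add, Finsupp.add_apply,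
    b.repr_linearCombination] at h0
  rw [Finsupp.notMem_support_iff.mp fun h => lt_irrefl (d i₀) (b.mem_span_image.mp hlow h),
    add_zero] at h0
  exact Finsupp.mem_support_iff.mp hi₀ h0.symm

end Triangular

section InducedModule

variable {F : Type*} [CommRing F] {Y W H : Type*} [Ring H] [Algebra F H]
  {Z : Y → H} {T : W → H} {χ : Y → F} {J : Submodule H H}

theorem mk_T_mul_Z (hJ : J = span H {x | ∃ μ, x = Z μ - χ μ • 1}) (w : W) (μ : Y) :
    (Submodule.Quotient.mk (T w * Z μ) : H ⧸ J) = χ μ • Submodule.Quotient.mk (T w) := by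
  rw [← Submodule.Quotient.mk_smul, Submodule.Quotient.eq, ← mul_smul_one, ← mul_sub,
    ← smul_eq_mul, hJ]
  exact smul_mem _ _ (subset_span ⟨μ, rfl⟩)

theorem span_mk_T (hJ : J = span H {x | ∃ μ, x = Z μ - χ μ • 1})
    (hspan : span F (Set.range fun p : Y × W => T p.2 * Z p.1) = ⊤) :
    span F (Set.range fun w => (Submodule.Quotient.mk (T w) : H ⧸ J)) = ⊤ := by
  rw [eq_top_iff]
  rintro x -
  obtain ⟨h, rfl⟩ := Submodule.Quotient.mk_surjective J x
  have hh : h ∈ span F (Set.range fun p : Y × W => T p.2 * Z p.1) := hspan ▸ mem_top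
  refine (span_le.mpr ?_ : _ ≤ (span F _).comap (J.mkQ.restrictScalars F)) hh
  rintro _ ⟨p, rfl⟩
  simp only [SetLike.mem_coe, mem_comap, LinearMap.restrictScalars_apply, mkQ_apply,
    mk_T_mul_Z hJ]
  exact smul_mem _ _ (subset_span ⟨p.2, rfl⟩)

theorem linearIndependent_mk_T [AddCommGroup Y] (hJ : J = span H {x | ∃ μ, x = Z μ - χ μ • 1})
    (hZ : ∀ μ ν, Z μ * Z ν = Z (μ + ν)) (hZ0 : Z 0 = 1)
    (hχ : ∀ μ ν, χ (μ + ν) = χ μ * χ ν) (hχ0 : χ 0 = 1)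
    (hind : LinearIndependent F fun p : Y × W => T p.2 * Z p.1)
    (hspan : span F (Set.range fun p : Y × W => T p.2 * Z p.1) = ⊤) :
    LinearIndependent F fun w => (Submodule.Quotient.mk (T w) : H ⧸ J) := by
  set b := Module.Basis.mk hind hspan.ge
  set φ : H →ₗ[F] W →₀ F := b.constr F fun p => χ p.1 • Finsupp.single p.2 (1 : F)
  have hφ : ∀ w μ, φ (T w * Z μ) = χ μ • Finsupp.single w (1 : F) := fun w μ => by
    rw [show T w * Z μ = b (μ, w) by simp [b]]
    exact b.constr_basis F _ _
  have hφJ : ∀ x ∈ J, ∀ h, φ (h * x) = 0 := by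
    rw [hJ]
    intro x hx
    induction hx using span_induction with
    | mem x hx =>
      obtain ⟨μ, rfl⟩ := hx
      suffices φ ∘ₗ LinearMap.mulRight F (Z μ - χ μ • 1) = 0 from
        fun h => LinearMap.congr_fun this h
      refine b.ext fun p => ?_
      simp only [b, Module.Basis.coe_mk, LinearMap.comp_apply, LinearMap.mulRight_apply,
        LinearMap.zero_apply]
      rw [mul_sub, mul_smul_comm, mul_one, mul_assoc, hZ, map_sub, map_smul, hφ, hφ, hχ,
        smul_smul, mul_comm, sub_self]
    | zero => simp
    | add x y _ _ hx hy => simp [mul_add, hx, hy]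
    | smul r x _ hx => simp [← mul_assoc, hx]
  let ψ : H ⧸ J →ₗ[F] W →₀ F :=
    (J.restrictScalars F).liftQ φ (fun x hx => by simpa using hφJ x hx 1) ∘ₗ
      (Quotient.restrictScalarsEquiv F J).symm.toLinearMap
  refine LinearIndependent.of_comp ψ ?_
  convert (Finsupp.basisSingleOne (R := F) (ι := W)).linearIndependent
  ext1 w
  simp only [Function.comp_apply, ψ, LinearMap.comp_apply, LinearEquiv.coe_coe,
    Quotient.restrictScalarsEquiv_symm_mk, liftQ_apply, Finsupp.coe_basisSingleOne]
  rw [← mul_one (T w), ← hZ0, hφ, hχ0, one_smul]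

end InducedModule

namespace CoxeterSystem

variable {B W : Type*} [Group W] {M : CoxeterMatrix B} (cs : CoxeterSystem M W)

local prefix:100 "s" => cs.simple
local prefix:100 "π" => cs.wordProd
local prefix:100 "ℓ" => cs.length
local prefix:100 "lis" => cs.leftInvSeq

section ReflectionCocycle

open scoped Classical

/-- The action of `s i` on pairs (reflection, sign) from the standard proof of the exchange
condition. -/
noncomputable def reflectionPerm (i : B) : Equiv.Perm (W × ℤˣ) :=
  Function.Involutive.toPerm (fun p => (s i * p.1 * s i, if p.1 = s i then -p.2 else p.2)) <| by
    rintro ⟨t, ε⟩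
    have hconj : s i * (s i * t * s i) * s i = t := by
      simp [← mul_assoc, cs.simple_mul_simple_self]
    have hfix : s i * t * s i = s i ↔ t = s i := by
      constructor
      · intro h; rw [← hconj, h, cs.simple_mul_simple_self, one_mul]
      · rintro rfl; simp [cs.simple_mul_simple_self]
    by_cases ht : t = s i <;> simp [hconj, hfix, ht]

theorem reflectionPerm_apply (i : B) (t : W) (ε : ℤˣ) :
    cs.reflectionPerm i (t, ε) = (s i * t * s i, if t = s i then -ε else ε) := rfl

theorem inv_reflectionPerm (i : B) : (cs.reflectionPerm i)⁻¹ = cs.reflectionPerm i :=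
  Function.Involutive.toPerm_symm _

theorem inv_prod_map_reflectionPerm_apply (ω : List B) (t : W) (ε : ℤˣ) :
    (ω.map cs.reflectionPerm).prod⁻¹ (t, ε) =
      ((π ω)⁻¹ * t * π ω, ε * (-1) ^ (lis ω).count t) := by
  induction ω generalizing t ε with
  | nil => simp
  | cons i ω ih =>
    have hcount : (lis (i :: ω)).count t =
        (lis ω).count (s i * t * s i) + if t = s i then 1 else 0 := by
      have : t = MulAut.conj (s i) (s i * t * s i) := by
        simp [← mul_assoc, cs.simple_mul_simple_self]
      rw [leftInvSeq, List.count_cons, this,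
        List.count_map_of_injective _ _ (MulAut.conj (s i)).injective]
      by_cases ht : t = s i <;> simp [← this, ht, Ne.symm]
    rw [List.map_cons, List.prod_cons, mul_inv_rev, inv_reflectionPerm, Equiv.Perm.mul_apply,
      reflectionPerm_apply, ih, hcount, cs.wordProd_cons]
    refine Prod.ext (by simp [mul_assoc]) ?_
    by_cases ht : t = s i <;> simp [ht, pow_succ]

theorem pow_reflectionPerm_mul (i j : B) (m : ℕ) :
    (cs.reflectionPerm i * cs.reflectionPerm j) ^ m =
      ((alternatingWord i j (2 * m)).map cs.reflectionPerm).prod := by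
  induction m with
  | zero => simp [alternatingWord]
  | succ m ih =>
    rw [show 2 * (m + 1) = 2 * m + 1 + 1 by ring, alternatingWord_succ', alternatingWord_succ',
      if_neg (by simp [parity_simps]), if_pos (even_two_mul m), pow_succ', ih]
    simp [mul_assoc]

theorem drop_leftInvSeq_braidWord (i j : B) :
    (lis (alternatingWord i j (2 * M i j))).drop (M i j) =
      (lis (alternatingWord i j (2 * M i j))).take (M i j) := by
  have hget : ∀ k (hk : k < 2 * M i j),
      (lis (alternatingWord i j (2 * M i j)))[k]'(by simpa using hk) = s i * (s j * s i) ^ k := by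
    intro k hk
    rw [cs.getElem_leftInvSeq_alternatingWord i j _ k hk, prod_alternatingWord_eq_mul_pow,
      if_neg (by simp [parity_simps])]
    congr 2
    omega
  apply List.ext_getElem (by simp; omega)
  intro k h₁ h₂
  simp only [List.length_drop, length_leftInvSeq, length_alternatingWord] at h₁
  rw [List.getElem_drop, List.getElem_take, hget _ (by omega), hget _ (by omega), pow_add,
    cs.simple_mul_simple_pow', one_mul]

theorem isLiftable_reflectionPerm : M.IsLiftable cs.reflectionPerm := by
  intro i j
  rw [pow_reflectionPerm_mul, ← inv_inj, inv_one]
  ext1 ⟨t, ε⟩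
  have hcount : Even ((lis (alternatingWord i j (2 * M i j))).count t) := by
    rw [← List.take_append_drop (M i j) (lis _), List.count_append, drop_leftInvSeq_braidWord]
    exact ⟨_, rfl⟩
  have hprod : π (alternatingWord i j (2 * M i j)) = 1 := by
    rw [prod_alternatingWord_eq_mul_pow, if_pos (even_two_mul _), one_mul,
      Nat.mul_div_cancel_left _ two_pos, cs.simple_mul_simple_pow]
  rw [inv_prod_map_reflectionPerm_apply, hprod, hcount.neg_one_pow]
  simp

noncomputable def reflectionCocycle : W →* Equiv.Perm (W × ℤˣ) :=
  cs.lift ⟨cs.reflectionPerm, cs.isLiftable_reflectionPerm⟩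

/-- `(-1) ^ n` where `n` is the number of occurrences of `t` in the left inversion sequence of
any word for `w` (see `reflectionSign_wordProd`). -/
noncomputable def reflectionSign (w t : W) : ℤˣ := ((cs.reflectionCocycle w)⁻¹ (t, 1)).2

theorem reflectionCocycle_wordProd (ω : List B) :
    cs.reflectionCocycle (π ω) = (ω.map cs.reflectionPerm).prod := by
  rw [wordProd, map_list_prod, List.map_map]
  congr 1
  exact List.map_congr_left fun i _ => cs.lift_apply_simple cs.isLiftable_reflectionPerm i

theorem reflectionSign_wordProd (ω : List B) (t : W) :
    cs.reflectionSign (π ω) t = (-1) ^ (lis ω).count t := by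
  simp [reflectionSign, reflectionCocycle_wordProd, inv_prod_map_reflectionPerm_apply]

theorem inv_reflectionCocycle_apply (w t : W) (ε : ℤˣ) :
    (cs.reflectionCocycle w)⁻¹ (t, ε) = (w⁻¹ * t * w, ε * cs.reflectionSign w t) := by
  obtain ⟨ω, rfl⟩ := cs.wordProd_surjective w
  rw [reflectionSign_wordProd, reflectionCocycle_wordProd, inv_prod_map_reflectionPerm_apply]

theorem reflectionSign_mul (u v t : W) :
    cs.reflectionSign (u * v) t = cs.reflectionSign u t * cs.reflectionSign v (u⁻¹ * t * u) := by
  have h := inv_reflectionCocycle_apply cs (u * v) t 1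
  rw [map_mul, mul_inv_rev, Equiv.Perm.mul_apply, inv_reflectionCocycle_apply,
    inv_reflectionCocycle_apply] at h
  simpa using (congrArg Prod.snd h).symm

theorem reflectionSign_one (t : W) : cs.reflectionSign 1 t = 1 := by
  simpa using cs.reflectionSign_wordProd [] t

theorem reflectionSign_simple (i : B) : cs.reflectionSign (s i) (s i) = -1 := by
  simpa using cs.reflectionSign_wordProd [i] (s i)

theorem IsReflection.reflectionSign_self {t : W} (ht : cs.IsReflection t) :
    cs.reflectionSign t t = -1 := by
  obtain ⟨w, i, rfl⟩ := ht
  have hcancel := cs.reflectionSign_mul w w⁻¹ (w * s i * w⁻¹)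
  have hsplit := cs.reflectionSign_mul (w * s i) w⁻¹ (w * s i * w⁻¹)
  rw [cs.reflectionSign_mul w (s i)] at hsplit
  have h₁ : w⁻¹ * (w * s i * w⁻¹) * w = s i := by group
  have h₂ : (w * s i)⁻¹ * (w * s i * w⁻¹) * (w * s i) = s i := by
    simp [mul_assoc, cs.simple_mul_simple_cancel_left]
  rw [mul_inv_cancel, reflectionSign_one, h₁] at hcancel
  rw [h₁, h₂, reflectionSign_simple] at hsplit
  rw [hsplit, mul_right_comm, ← hcancel, one_mul]

theorem mem_leftInvSeq_of_reflectionSign_eq_neg_one {ω : List B} {t : W}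
    (h : cs.reflectionSign (π ω) t = -1) : t ∈ lis ω := by
  rw [← List.count_pos_iff, Nat.pos_iff_ne_zero]
  intro h0
  rw [reflectionSign_wordProd, h0, pow_zero] at h
  exact absurd h (by decide)

theorem reflectionSign_eq_neg_one_of_length_mul_lt {w t : W} (ht : cs.IsReflection t)
    (hlt : ℓ (t * w) < ℓ w) : cs.reflectionSign w t = -1 := by
  have hsplit := cs.reflectionSign_mul t (t * w) t
  rw [← mul_assoc, ht.mul_self, one_mul, ht.inv, ht.mul_self, one_mul,
    ht.reflectionSign_self] at hsplit
  rcases Int.units_eq_one_or (cs.reflectionSign (t * w) t) with h | h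
  · rw [hsplit, h, mul_one]
  · obtain ⟨ω, hω, hωw⟩ := cs.exists_isReduced (t * w)
    rw [hωw] at h
    have hinv := (cs.isLeftInversion_of_mem_leftInvSeq hω
      (cs.mem_leftInvSeq_of_reflectionSign_eq_neg_one h)).2
    rw [← hωw, ← mul_assoc, ht.mul_self, one_mul] at hinv
    omega

/-- The strong exchange condition: every left inversion of `w` occurs in the left inversion
sequence of every word for `w`. -/
theorem mem_leftInvSeq_of_length_mul_lt {w t : W} (ht : cs.IsReflection t)
    (hlt : ℓ (t * w) < ℓ w) {ω : List B} (hω : π ω = w) : t ∈ lis ω :=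
  cs.mem_leftInvSeq_of_reflectionSign_eq_neg_one
    (hω ▸ cs.reflectionSign_eq_neg_one_of_length_mul_lt ht hlt)

end ReflectionCocycle

theorem leftInvSeq_append (ω₁ ω₂ : List B) :
    lis (ω₁ ++ ω₂) = lis ω₁ ++ (lis ω₂).map (MulAut.conj (π ω₁)) := by
  induction ω₁ with
  | nil => simp
  | cons i ω₁ ih =>
    simp [leftInvSeq, ih, cs.wordProd_cons, map_mul]

theorem length_mul_add_length_of_forall_isLeftDescent {w : W}
    (hw : ∀ i, cs.IsLeftDescent w i) (v : W) : ℓ (v * w) + ℓ v = ℓ w := by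
  induction hn : ℓ v generalizing v with
  | zero => rw [cs.length_eq_zero_iff.mp hn, one_mul, add_zero]
  | succ n ih =>
    obtain ⟨i, hi⟩ := cs.exists_rightDescent_of_ne_one (w := v) (by rintro rfl; simp at hn)
    have hv' : ℓ (v * s i) = n := by have := cs.isRightDescent_iff.mp hi; omega
    have hih := ih (v * s i) hv'
    obtain ⟨ω₁, hω₁, hω₁v⟩ := cs.exists_isReduced (v * s i)⁻¹
    obtain ⟨ω₂, hω₂, hω₂u⟩ := cs.exists_isReduced (v * s i * w)
    have hmem : s i ∈ lis (ω₁ ++ ω₂) :=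
      cs.mem_leftInvSeq_of_length_mul_lt (cs.isReflection_simple i) (hw i)
        (by rw [wordProd_append, ← hω₁v, ← hω₂u]; group)
    rw [leftInvSeq_append, List.mem_append, List.mem_map] at hmem
    rcases hmem with h₁ | ⟨y, hy, hyi⟩
    · have h₁ := (cs.isLeftInversion_of_mem_leftInvSeq hω₁ h₁).2
      rw [show s i * π ω₁ = v⁻¹ by rw [← hω₁v, mul_inv_rev, mul_inv_cancel_left], ← hω₁v,
        length_inv, length_inv] at h₁
      omega
    · have hy' := (cs.isLeftInversion_of_mem_leftInvSeq hω₂ hy).2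
      have hyu : y * π ω₂ = v * w := by
        rw [← hω₂u, ← (MulAut.conj (π ω₁)).symm_apply_apply y, hyi, MulAut.conj_symm_apply,
          ← hω₁v, inv_inv]
        simp [mul_assoc, cs.simple_mul_simple_cancel_left]
      rw [hyu, ← hω₂u] at hy'
      have := cs.length_le_length_mul_add_left v w
      omega

theorem finite_setOf_length_le (hS : (Set.range cs.simple).Finite) (n : ℕ) :
    {v : W | ℓ v ≤ n}.Finite := by
  have := hS.to_subtype
  refine ((List.finite_length_le (α := Set.range cs.simple) n).image
    fun l => (l.map Subtype.val).prod).subset ?_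
  intro v hv
  obtain ⟨ω, hω, rfl⟩ := cs.exists_isReduced v
  refine ⟨ω.map fun i => ⟨s i, i, rfl⟩, by simpa [hω.eq] using hv, ?_⟩
  simp [wordProd, Function.comp_def]

theorem finite_of_forall_isLeftDescent {w : W} (hw : ∀ i, cs.IsLeftDescent w i) : Finite W := by
  obtain ⟨ω, -, rfl⟩ := cs.exists_isReduced w
  have hS : (Set.range cs.simple).Finite := (lis ω).finite_toSet.subset <| by
    rintro _ ⟨i, rfl⟩
    exact cs.mem_leftInvSeq_of_length_mul_lt (cs.isReflection_simple i) (hw i) rfl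
  refine Set.finite_univ_iff.mp ((cs.finite_setOf_length_le hS (ℓ (π ω))).subset fun v _ => ?_)
  have := cs.length_mul_add_length_of_forall_isLeftDescent hw v
  simp only [Set.mem_ofPred_eq]
  omega

theorem exists_length_simple_mul_eq_add_one [Infinite W] (w : W) :
    ∃ i, ℓ (s i * w) = ℓ w + 1 := by
  by_contra! h
  have hw : ∀ i, cs.IsLeftDescent w i := fun i => by
    have := cs.length_simple_mul w i
    have := h i
    rw [IsLeftDescent]
    omega
  have := cs.finite_of_forall_isLeftDescent hw
  exact not_finite W

section BasisOperators

variable {F V : Type*} [CommRing F] [AddCommGroup V] [Module F V] (b : Module.Basis W F V)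
  (A : B → V →ₗ[F] V)

theorem apply_mem_span_image_of_mem (hA : ∀ i w, A i (b w) ∈ span F (b '' {w, s i * w}))
    (i : B) {S : Set W} {x : V} (hx : x ∈ span F (b '' S)) :
    A i x ∈ span F (b '' (S ∪ (s i * ·) '' S)) := by
  refine (span_le.mpr ?_ : span F (b '' S) ≤ (span F _).comap (A i)) hx
  rintro _ ⟨w, hw, rfl⟩
  refine span_mono (Set.image_mono ?_) (hA i w)
  rintro _ (rfl | rfl)
  exacts [Or.inl hw, Or.inr ⟨w, hw, rfl⟩]

noncomputable def maxLengthSupport (x : V) : ℕ := (b.repr x).support.sup cs.length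

variable {b A}

theorem maxLengthSupport_apply_le (hA : ∀ i w, A i (b w) ∈ span F (b '' {w, s i * w}))
    (i : B) (x : V) : cs.maxLengthSupport b (A i x) ≤ cs.maxLengthSupport b x + 1 := by
  refine Finset.sup_le fun u hu => ?_
  rcases b.mem_span_image.mp (cs.apply_mem_span_image_of_mem b A hA i (b.mem_span_repr_support x))
    hu with hu | ⟨w, hw, rfl⟩
  · exact (Finset.le_sup (f := cs.length) hu).trans (Nat.le_succ _)
  · have := cs.length_simple_mul w i
    have := Finset.le_sup (f := cs.length) hw
    dsimp only [maxLengthSupport]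
    omega

theorem repr_apply_simple_mul_of_maxLength (hA : ∀ i w, A i (b w) ∈ span F (b '' {w, s i * w}))
    (hAasc : ∀ i w, ℓ (s i * w) = ℓ w + 1 → A i (b w) = b (s i * w)) {x : V} {w₀ : W} {i : B}
    (hmax : ∀ w ∈ (b.repr x).support, ℓ w ≤ ℓ w₀) (hi : ℓ (s i * w₀) = ℓ w₀ + 1) :
    b.repr (A i x) (s i * w₀) = b.repr x w₀ := by
  classical
  set x' := b.repr.symm ((b.repr x).erase w₀)
  have hsplit : x = b.repr x w₀ • b w₀ + x' := by
    apply b.repr.injective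
    simp [x', Finsupp.single_add_erase]
  have hx' : A i x' ∈ span F (b '' (_ ∪ (s i * ·) '' _)) :=
    cs.apply_mem_span_image_of_mem b A hA i (b.mem_span_repr_support x')
  -- `s i * w₀` is longer than everything else in the support, so only `w₀` contributes to it
  have htop : s i * w₀ ∉ (↑(b.repr x').support ∪ (s i * ·) '' ↑(b.repr x').support : Set W) := by
    simp only [x', LinearEquiv.apply_symm_apply, Finsupp.support_erase, Set.mem_union,
      Finset.mem_coe, Finset.mem_erase, Set.mem_image]
    rintro (⟨-, hw⟩ | ⟨w, ⟨hne, -⟩, hw⟩)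
    · have := hmax _ hw
      omega
    · exact hne (mul_left_cancel hw)
  conv_lhs => rw [hsplit]
  rw [map_add, map_smul, hAasc i w₀ hi, map_add, map_smul, Finsupp.add_apply,
    b.repr_self, Finsupp.smul_apply, Finsupp.single_eq_same, smul_eq_mul, mul_one,
    Finsupp.notMem_support_iff.mp (fun h => htop (b.mem_span_image.mp hx' h)), add_zero]

theorem exists_maxLengthSupport_apply [Infinite W]
    (hA : ∀ i w, A i (b w) ∈ span F (b '' {w, s i * w}))
    (hAasc : ∀ i w, ℓ (s i * w) = ℓ w + 1 → A i (b w) = b (s i * w)) {x : V} (hx : x ≠ 0) :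
    ∃ i, cs.maxLengthSupport b (A i x) = cs.maxLengthSupport b x + 1 := by
  obtain ⟨w₀, hw₀, hw₀max⟩ := Finset.exists_mem_eq_sup _
    (Finsupp.support_nonempty_iff.mpr (b.repr.map_ne_zero_iff.mpr hx)) cs.length
  obtain ⟨i, hi⟩ := cs.exists_length_simple_mul_eq_add_one w₀
  have hcoeff := cs.repr_apply_simple_mul_of_maxLength hA hAasc
    (fun w hw => hw₀max ▸ Finset.le_sup (f := cs.length) hw) hi
  refine ⟨i, le_antisymm (cs.maxLengthSupport_apply_le hA i x) ?_⟩
  rw [maxLengthSupport, hw₀max, ← hi]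
  exact Finset.le_sup (f := cs.length)
    (Finsupp.mem_support_iff.mpr (hcoeff ▸ Finsupp.mem_support_iff.mp hw₀))

theorem maxLengthSupport_le_of_mem_span {S : Finset V} {y : V} (hy : y ∈ span F (S : Set V)) :
    cs.maxLengthSupport b y ≤ S.sup (cs.maxLengthSupport b) := by
  set N := S.sup (cs.maxLengthSupport b)
  refine Finset.sup_le fun w hw => b.mem_span_image.mp
    ((span_le.mpr fun x hx => ?_ : _ ≤ span F (b '' {w | ℓ w ≤ N})) hy) hw
  refine span_mono (Set.image_mono fun u hu => ?_) (b.mem_span_repr_support x)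
  exact (Finset.le_sup (f := cs.length) hu).trans (Finset.le_sup (f := cs.maxLengthSupport b) hx)

theorem not_finite_of_forall_apply_mem [Infinite W]
    (hA : ∀ i w, A i (b w) ∈ span F (b '' {w, s i * w}))
    (hAasc : ∀ i w, ℓ (s i * w) = ℓ w + 1 → A i (b w) = b (s i * w))
    {P : Submodule F V} (hP : ∀ i, ∀ x ∈ P, A i x ∈ P) (hP0 : P ≠ ⊥) :
    ¬ Module.Finite F P := by
  intro hfin
  obtain ⟨S, hS⟩ := Module.Finite.iff_fg.mp hfin
  have hunbounded : ∀ k, ∃ y ∈ P, y ≠ 0 ∧ k ≤ cs.maxLengthSupport b y := by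
    intro k
    induction k with
    | zero =>
      obtain ⟨y, hy, hy0⟩ := (Submodule.ne_bot_iff P).mp hP0
      exact ⟨y, hy, hy0, Nat.zero_le _⟩
    | succ k ih =>
      obtain ⟨y, hy, hy0, hk⟩ := ih
      obtain ⟨i, hi⟩ := cs.exists_maxLengthSupport_apply hA hAasc hy0
      refine ⟨A i y, hP i y hy, fun h => ?_, by omega⟩
      simp [h, maxLengthSupport] at hi
  obtain ⟨y, hy, -, hlt⟩ := hunbounded (S.sup (cs.maxLengthSupport b) + 1)
  have := cs.maxLengthSupport_le_of_mem_span (b := b) (hS ▸ hy)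
  omega

end BasisOperators

section HeckeAlgebra

variable (F : Type*) [CommRing F] {Y H : Type*} [Ring H] [Algebra F H]

structure IsHeckeFamily (T : W → H) : Prop where
  map_one : T 1 = 1
  mul_of_length_eq : ∀ i w, ℓ (s i * w) = ℓ w + 1 → T (s i * w) = T (s i) * T w
  simple_mul_mem_span : ∀ i w, T (s i) * T w ∈ span F {T w, T (s i * w)}

def lengthFiltration (Z : Y → H) (T : W → H) (n : ℕ) : Submodule F H :=
  span F ((fun p : Y × W => Z p.1 * T p.2) '' {p | ℓ p.2 < n})

variable {F} {Z : Y → H} {T : W → H}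

theorem mul_T_mem_lengthFiltration {D : H} (hD : D ∈ span F (Set.range Z)) {n : ℕ} {u : W}
    (hu : ℓ u < n) : D * T u ∈ cs.lengthFiltration F Z T n := by
  refine (span_le.mpr ?_ : _ ≤ (cs.lengthFiltration F Z T n).comap (LinearMap.mulRight F (T u))) hD
  rintro _ ⟨μ, rfl⟩
  exact subset_span ⟨(μ, u), hu, rfl⟩

variable [AddCommGroup Y] {act : W →* Multiplicative (AddAut Y)}

theorem T_simple_mul_mem_lengthFiltration (hT : cs.IsHeckeFamily F T)
    (hTZ : ∀ i μ, T (s i) * Z μ - Z ((act (s i)).toAdd μ) * T (s i) ∈ span F (Set.range Z))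
    (i : B) {n : ℕ} {x : H} (hx : x ∈ cs.lengthFiltration F Z T n) :
    T (s i) * x ∈ cs.lengthFiltration F Z T (n + 1) := by
  refine (span_le.mpr ?_ : _ ≤ (cs.lengthFiltration F Z T (n + 1)).comap
    (LinearMap.mulLeft F (T (s i)))) hx
  rintro _ ⟨⟨μ, u⟩, hu, rfl⟩
  have hu : ℓ u < n := hu
  have hsu : ℓ (s i * u) < n + 1 := by have := cs.length_simple_mul u i; omega
  have hZTT : Z ((act (s i)).toAdd μ) * (T (s i) * T u) ∈ cs.lengthFiltration F Z T (n + 1) := by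
    refine (span_le.mpr ?_ : _ ≤ (cs.lengthFiltration F Z T (n + 1)).comap
      (LinearMap.mulLeft F (Z ((act (s i)).toAdd μ)))) (hT.simple_mul_mem_span i u)
    rintro _ (rfl | rfl)
    exacts [subset_span ⟨(_, u), by simp only [Set.mem_ofPred_eq]; omega, rfl⟩,
      subset_span ⟨(_, s i * u), hsu, rfl⟩]
  have hsplit : T (s i) * (Z μ * T u) =
      (T (s i) * Z μ - Z ((act (s i)).toAdd μ) * T (s i)) * T u
        + Z ((act (s i)).toAdd μ) * (T (s i) * T u) := by
    noncomm_ring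
  change T (s i) * (Z μ * T u) ∈ cs.lengthFiltration F Z T (n + 1)
  rw [hsplit]
  exact add_mem (cs.mul_T_mem_lengthFiltration (hTZ i μ) (by omega)) hZTT

theorem T_mul_Z_sub_mem_lengthFiltration (hT : cs.IsHeckeFamily F T)
    (hTZ : ∀ i μ, T (s i) * Z μ - Z ((act (s i)).toAdd μ) * T (s i) ∈ span F (Set.range Z))
    (w : W) (μ : Y) :
    T w * Z μ - Z ((act w).toAdd μ) * T w ∈ cs.lengthFiltration F Z T (ℓ w) := by
  induction hn : ℓ w generalizing w with
  | zero => simp [cs.length_eq_zero_iff.mp hn, hT.map_one]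
  | succ n ih =>
    obtain ⟨i, hi⟩ := cs.exists_leftDescent_of_ne_one (w := w) (by rintro rfl; simp at hn)
    obtain ⟨w', rfl⟩ : ∃ w', w = s i * w' := ⟨s i * w, (cs.simple_mul_simple_cancel_left i).symm⟩
    have hw' : ℓ w' = n := by
      have := cs.isLeftDescent_iff.mp hi
      rw [cs.simple_mul_simple_cancel_left] at this
      omega
    have hsplit : T (s i * w') * Z μ - Z ((act (s i * w')).toAdd μ) * T (s i * w') =
        (T (s i) * Z ((act w').toAdd μ) - Z ((act (s i)).toAdd ((act w').toAdd μ)) * T (s i))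
          * T w' + T (s i) * (T w' * Z μ - Z ((act w').toAdd μ) * T w') := by
      rw [hT.mul_of_length_eq i w' (by omega), map_mul, toAdd_mul, AddAut.add_apply]
      noncomm_ring
    rw [hsplit]
    exact add_mem (cs.mul_T_mem_lengthFiltration (hTZ i _) (by omega))
      (cs.T_simple_mul_mem_lengthFiltration hT hTZ i (ih w' hw'))

theorem T_mul_Z_sub_mem_span_lt (hT : cs.IsHeckeFamily F T)
    (hTZ : ∀ i μ, T (s i) * Z μ - Z ((act (s i)).toAdd μ) * T (s i) ∈ span F (Set.range Z))
    (p : Y × W) :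
    T p.2 * Z ((act p.2⁻¹).toAdd p.1) - Z p.1 * T p.2 ∈
      span F ((fun p : Y × W => Z p.1 * T p.2) '' {q | ℓ q.2 < ℓ p.2}) := by
  simpa [lengthFiltration] using
    cs.T_mul_Z_sub_mem_lengthFiltration hT hTZ p.2 ((act p.2⁻¹).toAdd p.1)

theorem span_T_mul_Z (hT : cs.IsHeckeFamily F T)
    (hTZ : ∀ i μ, T (s i) * Z μ - Z ((act (s i)).toAdd μ) * T (s i) ∈ span F (Set.range Z))
    (hspan : span F (Set.range fun p : Y × W => Z p.1 * T p.2) = ⊤) :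
    span F (Set.range fun p : Y × W => T p.2 * Z p.1) = ⊤ := by
  refine eq_top_iff.mpr (hspan.ge.trans ((span_range_le_of_sub_mem_span_lt (fun p : Y × W => ℓ p.2)
    (cs.T_mul_Z_sub_mem_span_lt hT hTZ)).trans (span_mono ?_)))
  rintro _ ⟨p, rfl⟩
  exact ⟨((act p.2⁻¹).toAdd p.1, p.2), rfl⟩

theorem linearIndependent_T_mul_Z (hT : cs.IsHeckeFamily F T)
    (hTZ : ∀ i μ, T (s i) * Z μ - Z ((act (s i)).toAdd μ) * T (s i) ∈ span F (Set.range Z))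
    (hind : LinearIndependent F fun p : Y × W => Z p.1 * T p.2)
    (hspan : span F (Set.range fun p : Y × W => Z p.1 * T p.2) = ⊤) :
    LinearIndependent F fun p : Y × W => T p.2 * Z p.1 := by
  have h := (Module.Basis.mk hind hspan.ge).linearIndependent_of_sub_mem_span_lt (fun p => ℓ p.2)
    (v := fun p : Y × W => T p.2 * Z ((act p.2⁻¹).toAdd p.1))
    (by simpa using cs.T_mul_Z_sub_mem_span_lt hT hTZ)
  have he : Function.Injective fun p : Y × W => ((act p.2).toAdd p.1, p.2) := by
    rintro ⟨μ, w⟩ ⟨ν, u⟩ h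
    simp only [Prod.mk.injEq] at h
    obtain ⟨h, rfl⟩ := h
    exact Prod.ext ((act w).toAdd.injective h) rfl
  simpa [Function.comp_def] using h.comp _ he

theorem not_finite_of_forall_T_simple_smul_mem [Infinite W] (hT : cs.IsHeckeFamily F T)
    (hTZ : ∀ i μ, T (s i) * Z μ - Z ((act (s i)).toAdd μ) * T (s i) ∈ span F (Set.range Z))
    (hZ : ∀ μ ν, Z μ * Z ν = Z (μ + ν)) (hZ0 : Z 0 = 1)
    (hind : LinearIndependent F fun p : Y × W => Z p.1 * T p.2)
    (hspan : span F (Set.range fun p : Y × W => Z p.1 * T p.2) = ⊤)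
    {χ : Y → F} (hχ : ∀ μ ν, χ (μ + ν) = χ μ * χ ν) (hχ0 : χ 0 = 1)
    {J : Submodule H H} (hJ : J = span H {x | ∃ μ, x = Z μ - χ μ • 1})
    {P : Submodule F (H ⧸ J)} (hP : ∀ i, ∀ x ∈ P, T (s i) • x ∈ P) (hP0 : P ≠ ⊥) :
    ¬ Module.Finite F P := by
  have hspanTZ := cs.span_T_mul_Z hT hTZ hspan
  let b := Module.Basis.mk (linearIndependent_mk_T hJ hZ hZ0 hχ hχ0
    (cs.linearIndependent_T_mul_Z hT hTZ hind hspan) hspanTZ) (span_mk_T hJ hspanTZ).ge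
  have hb : ∀ w, b w = Submodule.Quotient.mk (T w) := fun w => Module.Basis.mk_apply _ _ _
  refine cs.not_finite_of_forall_apply_mem (b := b)
    (A := fun i => DistribSMul.toLinearMap F _ (T (s i))) (fun i w => ?_) (fun i w hw => ?_) hP hP0
  · have := apply_mem_span_image_of_mem_span (J.mkQ.restrictScalars F) (hT.simple_mul_mem_span i w)
    rw [Set.image_pair] at this ⊢
    simpa [hb, ← Submodule.Quotient.mk_smul] using this
  · simp [hb, ← Submodule.Quotient.mk_smul, hT.mul_of_length_eq i w hw]

end HeckeAlgebra

end CoxeterSystem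

/-- If `W` is infinite, every nonzero subspace of the principal series `I_τ` stable under
the Hecke operators `H_w` is infinite dimensional over `F`; consequently no nonzero finite
dimensional `H`-module embeds into `I_τ`. -/
theorem stmt15 {F : Type*} [Field F] {B W : Type*} [Group W] [Infinite W]
    {M : CoxeterMatrix B} (cs : CoxeterSystem M W)
    {Y : Type*} [AddCommGroup Y] (act : W →* Multiplicative (AddAut Y))
    {H : Type*} [Ring H] [Algebra F H]
    (σ : B → Fˣ) (Z : Y → H) (T : W → H)
    (hind : LinearIndependent F (fun p : Y × W => Z p.1 * T p.2))
    (hspan : Submodule.span F (Set.range fun p : Y × W => Z p.1 * T p.2) = ⊤)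
    (hT1 : T 1 = 1) (hZ0 : Z 0 = 1)
    (hBL2 : ∀ (i : B) (w : W), T (cs.simple i) * T w =
      if cs.length (cs.simple i * w) = cs.length w + 1 then T (cs.simple i * w)
      else ((σ i : F) - (↑(σ i)⁻¹ : F)) • T w + T (cs.simple i * w))
    (hBL3 : ∀ lam mu : Y, Z lam * Z mu = Z (lam + mu))
    (hBL4 : ∀ (i : B) (lam : Y),
      T (cs.simple i) * Z lam - Z (Multiplicative.toAdd (act (cs.simple i)) lam) * T (cs.simple i)
        ∈ Submodule.span F (Set.range Z))
    (τ : Y → Fˣ) (hτ : ∀ lam mu : Y, τ (lam + mu) = τ lam * τ mu)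
    (J : Submodule H H)
    (hJ : J = Submodule.span H {x : H | ∃ lam : Y, x = Z lam - (τ lam : F) • 1}) :
    (∀ P : Submodule F (H ⧸ J), (∀ (w : W), ∀ x ∈ P, T w • x ∈ P) → P ≠ ⊥ →
      ¬ Module.Finite F P) ∧
    (∀ (V : Type*) (_ : AddCommGroup V) (_ : Module H V) (_ : Module F V)
      (_ : IsScalarTower F H V), Module.Finite F V → Nontrivial V →
      ∀ f : V →ₗ[H] (H ⧸ J), ¬ Function.Injective f) := by
  have hT : cs.IsHeckeFamily F T := by
    refine ⟨hT1, fun i w hw => by rw [hBL2, if_pos hw], fun i w => ?_⟩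
    rw [hBL2]
    split_ifs
    · exact subset_span (Set.mem_insert_of_mem _ rfl)
    · exact add_mem (smul_mem _ _ (subset_span (Set.mem_insert _ _)))
        (subset_span (Set.mem_insert_of_mem _ rfl))
  have hτ0 : (τ 0 : F) = 1 := by
    simpa using (hτ 0 0).symm
  have hfinite : ∀ P : Submodule F (H ⧸ J), (∀ (w : W), ∀ x ∈ P, T w • x ∈ P) → P ≠ ⊥ →
      ¬ Module.Finite F P := fun P hP hP0 =>
    cs.not_finite_of_forall_T_simple_smul_mem hT hBL4 hBL3 hZ0 hind hspan
      (χ := fun μ => (τ μ : F)) (fun μ ν => by simp [hτ]) hτ0 hJ (fun i => hP (cs.simple i)) hP0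
  refine ⟨hfinite, fun V _ _ _ _ _ _ f hf => hfinite (LinearMap.range (f.restrictScalars F)) ?_ ?_
    (Module.Finite.range _)⟩
  · rintro w _ ⟨v, rfl⟩
    exact ⟨T w • v, f.map_smul _ _⟩
  · obtain ⟨v, hv⟩ := exists_ne (0 : V)
    exact (Submodule.ne_bot_iff _).mpr ⟨f v, ⟨v, rfl⟩, fun h => hv (hf (h.trans f.map_zero.symm))⟩
end
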